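/- arXiv:1905.05655 — 15 statements merged into one kernel-verified Lean document; each statement's English description precedes it below -/
import Mathlib

section
/- Fix integers B ≥ 1 and 1 ≤ k ≤ B. Consider the ski-rental algorithm A_k with one advice bit: if the bit is 1 it rents on days 1,…,B−1 and buys on day B, and if the bit is 0 it rents on days 1,…,k−1 and buys on day k. Thus on an instance with D ≥ 1 skiing days its cost is cost₁(D) = D if D < B and 2B−1 if D ≥ B (bit 1), and cost₀(D) = D if D < k and B+k−1 if D ≥ k (bit 0). Then for every integer D ≥ 1: (i) if the advice bit is trusted (it equals 1 exactly when D < B), the incurred cost is at most (1+(k−1)/B)·min(D,B); and (ii) for each bit value b ∈ {0,1}, cost_b(D) ≤ (1+(B−1)/k)·min(D,B). In other words, A_k is (1+(k−1)/B, 1+(B−1)/k)-competitive. -/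
/-- the ski-rental algorithm `A_k` with one advice bit is
`(1 + (k-1)/B, 1 + (B-1)/k)`-competitive. -/
theorem ski_rental_Ak_competitive (B k : ℕ) (hB : 1 ≤ B) (hk1 : 1 ≤ k) (hkB : k ≤ B)
    (cost0 cost1 : ℕ → ℝ)
    (hcost1 : ∀ D : ℕ, cost1 D = if D < B then (D : ℝ) else 2 * (B : ℝ) - 1)
    (hcost0 : ∀ D : ℕ, cost0 D = if D < k then (D : ℝ) else (B : ℝ) + (k : ℝ) - 1) :
    ∀ D : ℕ, 1 ≤ D →
      ((if D < B then cost1 D else cost0 D)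
          ≤ (1 + ((k : ℝ) - 1) / (B : ℝ)) * min (D : ℝ) (B : ℝ)) ∧
      (cost0 D ≤ (1 + ((B : ℝ) - 1) / (k : ℝ)) * min (D : ℝ) (B : ℝ)) ∧
      (cost1 D ≤ (1 + ((B : ℝ) - 1) / (k : ℝ)) * min (D : ℝ) (B : ℝ)) := by
  intro D hD
  have hBR : (1 : ℝ) ≤ (B : ℝ) := by exact_mod_cast hB
  have hkR : (1 : ℝ) ≤ (k : ℝ) := by exact_mod_cast hk1
  have hkBR : (k : ℝ) ≤ (B : ℝ) := by exact_mod_cast hkB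
  have hDR : (1 : ℝ) ≤ (D : ℝ) := by exact_mod_cast hD
  have hBpos : (0 : ℝ) < B := by linarith
  have hkpos : (0 : ℝ) < k := by linarith
  have hf1 : (1 : ℝ) ≤ 1 + ((k : ℝ) - 1) / (B : ℝ) := by
    have : 0 ≤ ((k : ℝ) - 1) / (B : ℝ) := div_nonneg (by linarith) (by linarith)
    linarith
  have hf2 : (1 : ℝ) ≤ 1 + ((B : ℝ) - 1) / (k : ℝ) := by
    have : 0 ≤ ((B : ℝ) - 1) / (k : ℝ) := div_nonneg (by linarith) (by linarith)
    linarith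
  rw [hcost0, hcost1]
  by_cases hDB : D < B
  · have hDBR : (D : ℝ) < (B : ℝ) := by exact_mod_cast hDB
    have hmin : min (D : ℝ) (B : ℝ) = (D : ℝ) := min_eq_left (le_of_lt hDBR)
    rw [hmin]
    refine ⟨?_, ?_, ?_⟩
    · simp only [if_pos hDB]
      nlinarith
    · by_cases hDk : D < k
      · simp only [if_pos hDk]; nlinarith
      · simp only [if_neg hDk]
        have hkD : (k : ℝ) ≤ (D : ℝ) := by
          exact_mod_cast Nat.le_of_not_lt hDk
        have key : (B : ℝ) + k - 1 ≤ (1 + ((B : ℝ) - 1) / k) * k := by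
          rw [add_mul, div_mul_cancel₀ _ (ne_of_gt hkpos)]
          linarith
        calc (B : ℝ) + k - 1 ≤ (1 + ((B : ℝ) - 1) / k) * k := key
          _ ≤ (1 + ((B : ℝ) - 1) / k) * D := by nlinarith
    · simp only [if_pos hDB]; nlinarith
  · have hDBR : (B : ℝ) ≤ (D : ℝ) := by exact_mod_cast Nat.le_of_not_lt hDB
    have hmin : min (D : ℝ) (B : ℝ) = (B : ℝ) := min_eq_right hDBR
    have hDk : ¬ D < k := fun h => hDB (lt_of_lt_of_le h hkB)
    rw [hmin]
    simp only [if_neg hDB, if_neg hDk]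
    refine ⟨?_, ?_, ?_⟩
    · rw [add_mul, div_mul_cancel₀ _ (ne_of_gt hBpos)]; linarith
    · have : (B : ℝ) + k - 1 ≤ (1 + ((B : ℝ) - 1) / k) * k := by
        rw [add_mul, div_mul_cancel₀ _ (ne_of_gt hkpos)]; linarith
      calc (B : ℝ) + k - 1 ≤ (1 + ((B : ℝ) - 1) / k) * k := this
        _ ≤ _ := by nlinarith
    · rw [add_mul]
      have : (B : ℝ) * ((B : ℝ) - 1) / k ≥ (B : ℝ) - 1 := by
        rw [ge_iff_le, le_div_iff₀ hkpos]; nlinarith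
      have h2 : ((B : ℝ) - 1) / k * B = (B : ℝ) * ((B : ℝ) - 1) / k := by ring
      rw [h2]; linarith
end

section
/- Fix integers B ≥ 1 and 1 ≤ k ≤ B. Let A be any advice set and model a deterministic ski-rental algorithm with advice as a map j : A → ℕ⁺ ∪ {∞}, where on advice φ the algorithm rents on days 1,…,j(φ)−1 and buys at the start of day j(φ) (never buying if j(φ)=∞); its cost on an instance with D ≥ 1 skiing days is cost(φ,D) = D if D < j(φ), and (j(φ)−1)+B otherwise. Let adv : ℕ⁺ → A be any (trusted) advice function. If for every integer D ≥ 1 the trusted cost satisfies cost(adv(D),D) ≤ (1+(k−1)/B)·min(D,B), then there exist an integer D ≥ 1 and an advice value φ ∈ A such that cost(φ,D) ≥ (1+(B−1)/k)·min(D,B). That is, any algorithm with trusted competitive ratio at most 1+(k−1)/B has untrusted competitive ratio at least 1+(B−1)/k. -/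
/-!
On the instance with `B + k` days the trusted advice costs at most `B + k - 1`, less than renting
throughout, so it must buy on some day `n ≤ k`. The same advice on the instance with `n` days pays
`n - 1 + B` against an optimum of `n`, and `n - 1 + B ≥ (1 + (B - 1)/k) n` precisely because `n ≤ k`.
-/

lemma mul_one_add_div_le {B k n : ℝ} (hB : 1 ≤ B) (hk : 0 < k) (hnk : n ≤ k) :
    (1 + (B - 1) / k) * n ≤ n - 1 + B := by
  have key : 0 ≤ (B - 1) * (k - n) := mul_nonneg (by linarith) (by linarith)
  rw [add_mul, div_mul_eq_mul_div, ← sub_nonneg]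
  calc (0 : ℝ) ≤ (B - 1) * (k - n) / k := by positivity
    _ = n - 1 + B - (1 * n + (B - 1) * n / k) := by field_simp; ring

section SkiRental

variable {A : Type*} {j : A → ℕ∞} {cost : A → ℕ → ℝ} {B : ℕ}

lemma exists_buy_day_of_cost_lt
    (hcost_rent : ∀ (φ : A) (D : ℕ), (D : ℕ∞) < j φ → cost φ D = (D : ℝ))
    (hcost_buy : ∀ (φ : A) (D n : ℕ), j φ = (n : ℕ∞) → n ≤ D →
      cost φ D = ((n : ℝ) - 1) + (B : ℝ))
    {φ : A} {D : ℕ} (h : cost φ D < D) :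
    ∃ n : ℕ, j φ = n ∧ n ≤ D ∧ cost φ D = (n - 1) + B := by
  rcases lt_or_ge (D : ℕ∞) (j φ) with hrent | hbuy
  · exact absurd (hcost_rent φ D hrent) h.ne
  · obtain ⟨n, hn, hnD⟩ := WithTop.le_coe_iff.mp hbuy
    exact ⟨n, hn, hnD, hcost_buy φ D n hn hnD⟩

end SkiRental

/-- any deterministic ski-rental algorithm with advice (of any size)
whose trusted competitive ratio is at most `1 + (k-1)/B` has untrusted competitive
ratio at least `1 + (B-1)/k`. -/
theorem ski_rental_pareto_lower_bound (B k : ℕ) (hB : 1 ≤ B) (hk1 : 1 ≤ k) (hkB : k ≤ B)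
    (A : Type*) (j : A → ℕ∞) (hj : ∀ φ : A, 1 ≤ j φ)
    (cost : A → ℕ → ℝ)
    (hcost_rent : ∀ (φ : A) (D : ℕ), (D : ℕ∞) < j φ → cost φ D = (D : ℝ))
    (hcost_buy : ∀ (φ : A) (D n : ℕ), j φ = (n : ℕ∞) → n ≤ D →
      cost φ D = ((n : ℝ) - 1) + (B : ℝ))
    (adv : ℕ → A)
    (htrusted : ∀ D : ℕ, 1 ≤ D →
      cost (adv D) D ≤ (1 + ((k : ℝ) - 1) / (B : ℝ)) * min (D : ℝ) (B : ℝ)) :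
    ∃ (D : ℕ) (φ : A), 1 ≤ D ∧
      cost φ D ≥ (1 + ((B : ℝ) - 1) / (k : ℝ)) * min (D : ℝ) (B : ℝ) := by
  set φ := adv (B + k)
  have hBpos : (0 : ℝ) < B := by exact_mod_cast hB
  have htr : cost φ (B + k) ≤ B + k - 1 := by
    have := htrusted (B + k) (by omega)
    rwa [min_eq_right (by push_cast; linarith [(k.cast_nonneg : (0 : ℝ) ≤ k)]),
      add_mul, div_mul_cancel₀ _ hBpos.ne', one_mul, add_sub_assoc'] at this
  obtain ⟨n, hn, -, hcost⟩ :=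
    exists_buy_day_of_cost_lt hcost_rent hcost_buy (D := B + k) (by push_cast; linarith)
  have hnk : n ≤ k := by exact_mod_cast (show (n : ℝ) ≤ k by linarith)
  have hn1 : 1 ≤ n := by exact_mod_cast hn ▸ hj φ
  refine ⟨n, φ, hn1, ?_⟩
  rw [hcost_buy φ n n hn le_rfl, min_eq_left (by exact_mod_cast hnk.trans hkB)]
  exact mul_one_add_div_le (by exact_mod_cast hB) (by exact_mod_cast hk1) (by exact_mod_cast hnk)
end

section
/- Assume w > 4. Then for every integer i ≥ 0: a(i) = ((p²−1)/(p^{i+2}−1))·(p/w)^{i/2} and b(i) = p·(p^i−1)/(p^{i+2}−1), where (p/w)^{i/2} denotes the real power ((p/w))^{i/2} of the positive real p/w. -/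
/-- The sequence `b` with `b 0 = 0` and `b i = (1 + b (i-1)) / (w - 1 - b (i-1))`. -/
noncomputable def bseq (w : ℝ) : ℕ → ℝ
  | 0 => 0
  | i + 1 => (1 + bseq w i) / (w - 1 - bseq w i)

/-- The sequence `a` with `a 0 = 1` and `a i = a (i-1) / (w - 1 - b (i-1))`. -/
noncomputable def aseq (w : ℝ) : ℕ → ℝ
  | 0 => 1
  | i + 1 => aseq w i / (w - 1 - bseq w i)

/-- The sequence `d` with `d 0 = 1` and `d i = d (i-1) * (1 + b (i-1))`. -/
noncomputable def dseq (w : ℝ) : ℕ → ℝ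
  | 0 => 1
  | i + 1 => dseq w i * (1 + bseq w i)

/-- The sequence `c` with `c 0 = 0` and `c i = c (i-1) + d (i-1) * a (i-1)`. -/
noncomputable def cseq (w : ℝ) : ℕ → ℝ
  | 0 => 0
  | i + 1 => cseq w i + dseq w i * aseq w i

/-- closed forms for `a` and `b` when `w > 4`. -/
theorem aseq_bseq_closed_form (w : ℝ) (hw : 4 < w) (p : ℝ)
    (hp : p = (w - 2 - Real.sqrt (w ^ 2 - 4 * w)) / 2) :
    ∀ i : ℕ,
      aseq w i = (p ^ 2 - 1) / (p ^ (i + 2) - 1) * (p / w) ^ ((i : ℝ) / 2) ∧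
      bseq w i = p * (p ^ i - 1) / (p ^ (i + 2) - 1) := by

  have hw0 : (0:ℝ) < w := by linarith
  set s := Real.sqrt (w ^ 2 - 4 * w) with hs_def
  have hs2 : s ^ 2 = w ^ 2 - 4 * w := Real.sq_sqrt (by nlinarith)
  have hsnn : 0 ≤ s := Real.sqrt_nonneg _
  have hp0 : 0 < p := by rw [hp]; nlinarith
  have hp1 : p < 1 := by rw [hp]; nlinarith [sq_nonneg (s - (w - 4))]
  have hwp : w * p = (p + 1) ^ 2 := by rw [hp]; nlinarith
  have h1p : (0:ℝ) < 1 + p := by linarith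
  have hw_eq : w = (p + 1) ^ 2 / p := by
    field_simp
    linarith [hwp]
  have hpw0 : 0 < p / w := div_pos hp0 hw0
  have hpow : ∀ n : ℕ, p ^ (n + 1) - 1 ≠ 0 := by
    intro n
    have : p ^ (n + 1) < 1 := pow_lt_one₀ hp0.le hp1 (Nat.succ_ne_zero n)
    linarith
  have hhalf : (p / w) ^ ((1:ℝ) / 2) = p / (1 + p) := by
    rw [← Real.sqrt_eq_rpow]
    have hpq : p / w = (p / (1 + p)) ^ 2 := by
      rw [hw_eq]
      field_simp
      ring
    rw [hpq, Real.sqrt_sq (by positivity)]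
  intro i
  induction i with
  | zero =>
    constructor
    · show aseq w 0 = _
      rw [aseq]
      norm_num
      exact (div_self (by simpa using hpow 1)).symm
    · show bseq w 0 = _
      rw [bseq]
      simp
  | succ i ih =>
    obtain ⟨ha, hb⟩ := ih
    have hd1 : p ^ (i + 2) - 1 ≠ 0 := hpow (i + 1)
    have hd2 : p ^ (i + 3) - 1 ≠ 0 := hpow (i + 2)
    have hpne : p ≠ 0 := hp0.ne'
    have h1pne : (1 : ℝ) + p ≠ 0 := h1p.ne'
    have hD : w - 1 - bseq w i = (p + 1) * (p ^ (i + 3) - 1) / (p * (p ^ (i + 2) - 1)) := by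
      rw [hb, hw_eq]
      field_simp
      ring
    constructor
    · show aseq w (i + 1) = _
      rw [aseq, ha, hD]
      have hcast : ((i + 1 : ℕ) : ℝ) / 2 = (i : ℝ) / 2 + 1 / 2 := by push_cast; ring
      rw [hcast, Real.rpow_add hpw0, hhalf]
      have hX : (0:ℝ) < (p / w) ^ ((i : ℝ) / 2) := Real.rpow_pos_of_pos hpw0 _
      field_simp
      ring
    · show bseq w (i + 1) = _
      rw [bseq, hD, hb]
      field_simp
      ring
end

section
/- Assume w > 4. Then for every integer i ≥ 0: c(i) = 1 + p − p^i(p²−1)/(p^{i+1}−1) and d(i) = ((p−1)/(p^{i+1}−1))·(pw)^{i/2}, where (pw)^{i/2} denotes the real power (pw)^{i/2} of the positive real pw. -/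
/-!
The smaller root `p` of `x² - (w - 2) x + 1` satisfies `p w = (p + 1)²`, so `w = (p + 1)² / p`.
In terms of `p` the Möbius recursion for `b` is solved by `b i = p (pⁱ - 1) / (pⁱ⁺² - 1)`, and
the remaining sequences then telescope: `a`, `d` and `c` have closed forms that each follow by
induction from the previous ones. Finally `(p w)^(i/2) = (p + 1)ⁱ`.
-/

section Root

variable {w p : ℝ}

theorem root_mul_eq_sq (hw : 4 ≤ w) (hp : p = (w - 2 - Real.sqrt (w ^ 2 - 4 * w)) / 2) :
    p * w = (p + 1) ^ 2 := by
  have hsq : Real.sqrt (w ^ 2 - 4 * w) ^ 2 = w ^ 2 - 4 * w := Real.sq_sqrt (by nlinarith)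
  rw [hp]
  linear_combination -hsq / 4

theorem root_pos (hw : 4 ≤ w) (hp : p = (w - 2 - Real.sqrt (w ^ 2 - 4 * w)) / 2) : 0 < p := by
  have hsq : Real.sqrt (w ^ 2 - 4 * w) ^ 2 = w ^ 2 - 4 * w := Real.sq_sqrt (by nlinarith)
  have hs : Real.sqrt (w ^ 2 - 4 * w) < w - 2 :=
    (Real.sqrt_lt' (by linarith)).2 (by nlinarith)
  rw [hp]
  linarith

theorem root_lt_one (hw : 4 < w) (hp : p = (w - 2 - Real.sqrt (w ^ 2 - 4 * w)) / 2) : p < 1 := by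
  have hs : w - 4 < Real.sqrt (w ^ 2 - 4 * w) :=
    (Real.lt_sqrt (by linarith)).2 (by nlinarith)
  rw [hp]
  linarith

end Root

section ClosedForms

variable {w p : ℝ}

theorem pow_sub_one_ne_zero (hp0 : 0 < p) (hp1 : p ≠ 1) {n : ℕ} (hn : n ≠ 0) : p ^ n - 1 ≠ 0 :=
  sub_ne_zero.2 fun h => hp1 ((pow_eq_one_iff_of_nonneg hp0.le hn).1 h)

theorem sub_one_sub_bseq_closed_form (hp0 : 0 < p) (hp1 : p ≠ 1) (hpw : p * w = (p + 1) ^ 2)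
    (i : ℕ) : w - 1 - p * (p ^ i - 1) / (p ^ (i + 2) - 1) =
      (p + 1) * (p ^ (i + 3) - 1) / (p * (p ^ (i + 2) - 1)) := by
  have h2 := pow_sub_one_ne_zero hp0 hp1 (n := i + 2) (by omega)
  rw [eq_div_iff (mul_ne_zero hp0.ne' h2)]
  field_simp
  linear_combination (p ^ (i + 2) - 1) * hpw

theorem bseq_eq (hp0 : 0 < p) (hp1 : p ≠ 1) (hpw : p * w = (p + 1) ^ 2) (i : ℕ) :
    bseq w i = p * (p ^ i - 1) / (p ^ (i + 2) - 1) := by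
  induction i with
  | zero => simp [bseq]
  | succ n ih =>
    have h2 := pow_sub_one_ne_zero hp0 hp1 (n := n + 2) (by omega)
    have h3 := pow_sub_one_ne_zero hp0 hp1 (n := n + 3) (by omega)
    rw [bseq, ih, sub_one_sub_bseq_closed_form hp0 hp1 hpw]
    field_simp
    ring

theorem aseq_eq (hp0 : 0 < p) (hp1 : p ≠ 1) (hpw : p * w = (p + 1) ^ 2) (i : ℕ) :
    aseq w i = (p / (p + 1)) ^ i * (p ^ 2 - 1) / (p ^ (i + 2) - 1) := by
  induction i with
  | zero => simp [aseq, div_self (pow_sub_one_ne_zero hp0 hp1 two_ne_zero)]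
  | succ n ih =>
    have h2 := pow_sub_one_ne_zero hp0 hp1 (n := n + 2) (by omega)
    have h3 := pow_sub_one_ne_zero hp0 hp1 (n := n + 3) (by omega)
    have hq : p + 1 ≠ 0 := by positivity
    rw [aseq, ih, bseq_eq hp0 hp1 hpw, sub_one_sub_bseq_closed_form hp0 hp1 hpw]
    simp only [div_pow]
    field_simp
    ring

theorem dseq_eq (hp0 : 0 < p) (hp1 : p ≠ 1) (hpw : p * w = (p + 1) ^ 2) (i : ℕ) :
    dseq w i = (p - 1) / (p ^ (i + 1) - 1) * (p + 1) ^ i := by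
  induction i with
  | zero => simp [dseq, div_self (sub_ne_zero.2 hp1)]
  | succ n ih =>
    have h1 := pow_sub_one_ne_zero hp0 hp1 (n := n + 1) (by omega)
    have h2 := pow_sub_one_ne_zero hp0 hp1 (n := n + 2) (by omega)
    rw [dseq, ih, bseq_eq hp0 hp1 hpw]
    field_simp
    ring

theorem cseq_eq (hp0 : 0 < p) (hp1 : p ≠ 1) (hpw : p * w = (p + 1) ^ 2) (i : ℕ) :
    cseq w i = 1 + p - p ^ i * (p ^ 2 - 1) / (p ^ (i + 1) - 1) := by
  induction i with
  | zero =>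
    have h1 : p - 1 ≠ 0 := sub_ne_zero.2 hp1
    simp only [cseq, pow_zero, one_mul, zero_add, pow_one]
    field_simp
    ring
  | succ n ih =>
    have h1 := pow_sub_one_ne_zero hp0 hp1 (n := n + 1) (by omega)
    have h2 := pow_sub_one_ne_zero hp0 hp1 (n := n + 2) (by omega)
    have hq : p + 1 ≠ 0 := by positivity
    rw [cseq, ih, dseq_eq hp0 hp1 hpw, aseq_eq hp0 hp1 hpw, div_pow]
    field_simp
    ring

end ClosedForms

theorem Real.sq_rpow_natCast_div_two {x : ℝ} (hx : 0 ≤ x) (n : ℕ) :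
    (x ^ 2) ^ ((n : ℝ) / 2) = x ^ n := by
  rw [← Real.rpow_natCast x 2, ← Real.rpow_mul hx, Nat.cast_ofNat,
    mul_div_cancel₀ _ two_ne_zero, Real.rpow_natCast]

/-- closed forms for `c` and `d` when `w > 4`. -/
theorem cseq_dseq_closed_form (w : ℝ) (hw : 4 < w) (p : ℝ)
    (hp : p = (w - 2 - Real.sqrt (w ^ 2 - 4 * w)) / 2) :
    ∀ i : ℕ,
      cseq w i = 1 + p - p ^ i * (p ^ 2 - 1) / (p ^ (i + 1) - 1) ∧
      dseq w i = (p - 1) / (p ^ (i + 1) - 1) * (p * w) ^ ((i : ℝ) / 2) := by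
  have hp0 := root_pos hw.le hp
  have hp1 := (root_lt_one hw hp).ne
  have hpw := root_mul_eq_sq hw.le hp
  intro i
  refine ⟨cseq_eq hp0 hp1 hpw i, ?_⟩
  rw [dseq_eq hp0 hp1 hpw, hpw, Real.sq_rpow_natCast_div_two (by positivity)]
end

section
/- Assume w = 4. Then for every integer i ≥ 0: a(i) = (2/(i+2))·(1/2^i), b(i) = i/(i+2), c(i) = 2 − 2/(i+1), and d(i) = 2^i/(i+1). -/
/-- closed forms for `a`, `b`, `c`, `d` when `w = 4`. -/
theorem abcd_closed_form_w_eq_four (w : ℝ) (hw : w = 4) :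
    ∀ i : ℕ,
      aseq w i = 2 / ((i : ℝ) + 2) * (1 / 2 ^ i) ∧
      bseq w i = (i : ℝ) / ((i : ℝ) + 2) ∧
      cseq w i = 2 - 2 / ((i : ℝ) + 1) ∧
      dseq w i = 2 ^ i / ((i : ℝ) + 1) := by
  subst hw
  intro i
  induction i with
  | zero => simp [aseq, bseq, cseq, dseq]
  | succ n ih =>
    obtain ⟨ha, hb, hc, hd⟩ := ih
    have h2 : ((n : ℝ) + 2) ≠ 0 := by positivity
    have h1 : ((n : ℝ) + 1) ≠ 0 := by positivity
    have hp : (2 : ℝ) ^ n ≠ 0 := by positivity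
    have hden : (4 : ℝ) - 1 - bseq 4 n = (2 * n + 6) / (n + 2) := by
      rw [hb]; field_simp; ring
    have hden' : (2 * (n : ℝ) + 6) / (n + 2) ≠ 0 := by positivity
    refine ⟨?_, ?_, ?_, ?_⟩
    · rw [aseq, ha, hden]; push_cast; field_simp; ring
    · have h : (4:ℝ) - 1 - (n:ℝ)/((n:ℝ)+2) = (2*n+6)/(n+2) := by field_simp; ring
      rw [bseq, hb, h]; push_cast; field_simp; ring
    · rw [cseq, hc, hd, ha]; push_cast; field_simp; ring
    · rw [dseq, hd, hb]; push_cast; field_simp; ring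
end

section
/- For every integer i ≥ 1, the product ∏_{j=1}^{i} b(j) equals 2/((i+1)(i+2)) when w = 4, and equals p^i·(p−1)(p²−1)/((p^{i+1}−1)(p^{i+2}−1)) when w > 4. -/
lemma pfacts (w : ℝ) (hw : 4 < w) (p : ℝ)
    (hp : p = (w - 2 - Real.sqrt (w ^ 2 - 4 * w)) / 2) :
    w * p = p^2 + 2*p + 1 ∧ 0 < p ∧ p < 1 := by
  have hnn : (0:ℝ) ≤ w^2 - 4*w := by nlinarith
  have hs : Real.sqrt (w^2 - 4*w) ^ 2 = w^2 - 4*w := Real.sq_sqrt hnn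
  have hs0 : 0 ≤ Real.sqrt (w^2 - 4*w) := Real.sqrt_nonneg _
  set s := Real.sqrt (w^2 - 4*w) with hsdef
  have hslt : s < w - 2 := by nlinarith
  have hsgt : w - 4 < s := by nlinarith
  refine ⟨by rw [hp]; nlinarith, by rw [hp]; linarith, by rw [hp]; linarith⟩

lemma bseq4 : ∀ i : ℕ, bseq 4 i = (i : ℝ) / ((i : ℝ) + 2) := by
  intro i
  induction i with
  | zero => simp [bseq]
  | succ i ih =>
    have h2 : (i : ℝ) + 2 ≠ 0 := by positivity
    have hd : (4:ℝ) - 1 - (i:ℝ)/((i:ℝ)+2) = (2*(i:ℝ)+6)/((i:ℝ)+2) := by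
      field_simp; ring
    have h3 : (2*(i:ℝ)+6) ≠ 0 := by positivity
    rw [bseq, ih, hd]
    push_cast
    field_simp
    ring

lemma bseqp (w p : ℝ) (hq : w * p = p^2 + 2*p + 1) (hp0 : 0 < p) (hp1 : p < 1) :
    ∀ i : ℕ, bseq w i = p * (p^i - 1) / (p^(i+2) - 1) := by
  have hpne : p ≠ 0 := ne_of_gt hp0
  have hw : w = (p^2 + 2*p + 1)/p := by field_simp; linarith
  have hlt : ∀ k : ℕ, 1 ≤ k → p^k - 1 ≠ 0 := by
    intro k hk
    have : p^k < 1 := pow_lt_one₀ (le_of_lt hp0) hp1 (by omega)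
    linarith
  intro i
  induction i with
  | zero => simp [bseq]
  | succ i ih =>
    have h2 := hlt (i+2) (by omega)
    have h3 := hlt (i+3) (by omega)
    have hp1' : p + 1 ≠ 0 := by linarith
    have hd : w - 1 - p * (p^i - 1) / (p^(i+2) - 1) = (p+1) * (p^(i+3) - 1) / (p * (p^(i+2) - 1)) := by
      rw [hw]
      field_simp
      ring
    rw [bseq, ih, hd]
    rw [div_div_eq_mul_div]
    field_simp
    ring

lemma prod4 : ∀ i : ℕ, ∏ j ∈ Finset.Icc 1 i, bseq 4 j = 2 / (((i : ℝ) + 1) * ((i : ℝ) + 2)) := by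
  intro i
  induction i with
  | zero => norm_num
  | succ i ih =>
    rw [Finset.prod_Icc_succ_top (by omega), ih, bseq4]
    have h1 : (i : ℝ) + 1 ≠ 0 := by positivity
    have h2 : (i : ℝ) + 2 ≠ 0 := by positivity
    have h3 : (i : ℝ) + 3 ≠ 0 := by positivity
    push_cast
    field_simp
    ring

lemma prodp (w p : ℝ) (hq : w * p = p^2 + 2*p + 1) (hp0 : 0 < p) (hp1 : p < 1) :
    ∀ i : ℕ, ∏ j ∈ Finset.Icc 1 i, bseq w j
      = p ^ i * ((p - 1) * (p ^ 2 - 1)) / ((p ^ (i + 1) - 1) * (p ^ (i + 2) - 1)) := by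
  have hlt : ∀ k : ℕ, 1 ≤ k → p^k - 1 ≠ 0 := by
    intro k hk
    have : p^k < 1 := pow_lt_one₀ (le_of_lt hp0) hp1 (by omega)
    linarith
  intro i
  induction i with
  | zero =>
    have h1 := hlt 1 (by omega)
    have h2 := hlt 2 (by omega)
    simp only [Finset.Icc_self, pow_zero, pow_one] at *
    rw [show Finset.Icc 1 0 = (∅ : Finset ℕ) by simp]
    rw [Finset.prod_empty]
    norm_num
    field_simp
  | succ i ih =>
    have h1 := hlt (i+1) (by omega)
    have h2 := hlt (i+2) (by omega)
    have h3 := hlt (i+3) (by omega)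
    rw [Finset.prod_Icc_succ_top (by omega), ih, bseqp w p hq hp0 hp1]
    rw [show i + 1 + 1 = i + 2 from rfl, show i + 1 + 2 = i + 3 from rfl]
    field_simp
    ring

/-- closed form for the product `∏_{j=1}^{i} b j`. -/
theorem prod_bseq_closed_form (w : ℝ) (hw : 4 ≤ w) (p : ℝ)
    (hp : p = (w - 2 - Real.sqrt (w ^ 2 - 4 * w)) / 2) :
    ∀ i : ℕ, 1 ≤ i →
      (w = 4 → ∏ j ∈ Finset.Icc 1 i, bseq w j = 2 / (((i : ℝ) + 1) * ((i : ℝ) + 2))) ∧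
      (4 < w → ∏ j ∈ Finset.Icc 1 i, bseq w j
        = p ^ i * ((p - 1) * (p ^ 2 - 1)) / ((p ^ (i + 1) - 1) * (p ^ (i + 2) - 1))) := by
  intro i _
  constructor
  · intro h4
    subst h4
    exact prod4 i
  · intro h4
    obtain ⟨hq, hp0, hp1⟩ := pfacts w h4 p hp
    exact prodp w p hq hp0 hp1 i
end

section
/- Fix a real u ≥ 1 and an integer m ≥ 1. Let x : ℕ → ℝ satisfy x(0) = 1, x(i) ≥ 0 for all 1 ≤ i ≤ m, x(m) = u, and ∑_{j=1}^{i} x(j) ≤ w·x(i−1) for every 1 ≤ i ≤ m. Then for every 1 ≤ i ≤ m: x(i) ≥ a(m−i)·u + b(m−i)·∑_{j=1}^{i−1} x(j), and ∑_{j=1}^{m} x(j) ≥ c(m−i)·u + d(m−i)·∑_{j=1}^{i} x(j). Moreover, if the constraints ∑_{j=1}^{l} x(j) ≤ w·x(l−1) hold with equality for all l with i+1 ≤ l ≤ m, then both of the above inequalities hold with equality. -/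
lemma bseq_bounds (w : ℝ) (hw : 4 ≤ w) : ∀ k, 0 ≤ bseq w k ∧ bseq w k < 1
  | 0 => by simp [bseq]
  | k+1 => by
    obtain ⟨h0, h1⟩ := bseq_bounds w hw k
    simp only [bseq]
    refine ⟨div_nonneg (by linarith) (by linarith), ?_⟩
    rw [div_lt_one (by linarith)]
    linarith

lemma dseq_pos (w : ℝ) (hw : 4 ≤ w) : ∀ k, 0 < dseq w k
  | 0 => by simp [dseq]
  | k+1 => by
    have h0 := (bseq_bounds w hw k).1
    have := dseq_pos w hw k
    simp only [dseq]
    nlinarith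

lemma bidding_aux (w : ℝ) (hw : 4 ≤ w) (u : ℝ)
    (m : ℕ) (x : ℕ → ℝ) (hxm : x m = u)
    (hC : ∀ i : ℕ, 1 ≤ i → i ≤ m → ∑ j ∈ Finset.Icc 1 i, x j ≤ w * x (i - 1)) :
    ∀ k : ℕ, ∀ i : ℕ, 1 ≤ i → i + k = m →
      (x i ≥ aseq w k * u + bseq w k * ∑ j ∈ Finset.Icc 1 (i - 1), x j) ∧
      (∑ j ∈ Finset.Icc 1 m, x j
        ≥ cseq w k * u + dseq w k * ∑ j ∈ Finset.Icc 1 i, x j) ∧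
      ((∀ l : ℕ, i + 1 ≤ l → l ≤ m → ∑ j ∈ Finset.Icc 1 l, x j = w * x (l - 1)) →
        (x i = aseq w k * u + bseq w k * ∑ j ∈ Finset.Icc 1 (i - 1), x j) ∧
        (∑ j ∈ Finset.Icc 1 m, x j
          = cseq w k * u + dseq w k * ∑ j ∈ Finset.Icc 1 i, x j)) := by
  have hS : ∀ n : ℕ, ∑ j ∈ Finset.Icc 1 (n + 1), x j
      = (∑ j ∈ Finset.Icc 1 n, x j) + x (n + 1) := fun n =>
    Finset.sum_Icc_succ_top (by omega) _
  intro k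
  induction k with
  | zero =>
    intro i hi him
    have hi' : i = m := by omega
    subst hi'
    simp only [aseq, bseq, cseq, dseq, hxm]
    refine ⟨by linarith, by linarith, fun _ => ⟨by ring, by ring⟩⟩
  | succ k ih =>
    intro i hi him
    obtain ⟨hb0, hb1⟩ := bseq_bounds w hw k
    have hd := dseq_pos w hw k
    have hD : (0:ℝ) < w - 1 - bseq w k := by linarith
    obtain ⟨ihA, ihB, ihE⟩ := ih (i + 1) (by omega) (by omega)
    simp only [Nat.add_sub_cancel] at ihA ihB ihE
    have hCi : ∑ j ∈ Finset.Icc 1 (i + 1), x j ≤ w * x i := by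
      have := hC (i + 1) (by omega) (by omega)
      simpa using this
    -- abbreviations
    set Si := ∑ j ∈ Finset.Icc 1 i, x j with hSi
    set Sp := ∑ j ∈ Finset.Icc 1 (i - 1), x j with hSp
    have hsplit : Si = Sp + x i := by
      obtain ⟨j, rfl⟩ : ∃ j, i = j + 1 := ⟨i - 1, by omega⟩
      simp only [hSi, hSp, Nat.add_sub_cancel]
      exact hS j
    have hSsucc : ∑ j ∈ Finset.Icc 1 (i + 1), x j = Si + x (i + 1) := hS i
    have hbexp : bseq w k * Si = bseq w k * Sp + bseq w k * x i := by
      rw [hsplit]; ring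
    have key : (w - 1 - bseq w k) * x i ≥ aseq w k * u + (1 + bseq w k) * Sp := by
      nlinarith [ihA, hCi, hSsucc, hbexp]
    have goal1 : x i ≥ aseq w (k + 1) * u + bseq w (k + 1) * Sp := by
      simp only [aseq, bseq]
      rw [ge_iff_le, div_mul_eq_mul_div, div_mul_eq_mul_div, ← add_div,
        div_le_iff₀ hD]
      nlinarith [key]
    have goal2 : ∑ j ∈ Finset.Icc 1 m, x j
        ≥ cseq w (k + 1) * u + dseq w (k + 1) * Si := by
      simp only [cseq, dseq]
      have h1 : Si + (aseq w k * u + bseq w k * Si) ≤ Si + x (i + 1) := by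
        linarith [ihA]
      have h2 : dseq w k * (Si + (aseq w k * u + bseq w k * Si))
          ≤ dseq w k * (Si + x (i + 1)) :=
        mul_le_mul_of_nonneg_left h1 hd.le
      nlinarith [ihB, hSsucc, h2]
    refine ⟨goal1, goal2, fun hT => ?_⟩
    have ihE' := ihE (fun l hl1 hl2 => hT l (by omega) hl2)
    obtain ⟨eqA, eqB⟩ := ihE'
    have hCeq : ∑ j ∈ Finset.Icc 1 (i + 1), x j = w * x i := by
      have := hT (i + 1) (by omega) (by omega)
      simpa using this
    have keyeq : (w - 1 - bseq w k) * x i = aseq w k * u + (1 + bseq w k) * Sp := by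
      nlinarith [eqA, hCeq, hSsucc, hbexp]
    constructor
    · simp only [aseq, bseq]
      rw [div_mul_eq_mul_div, div_mul_eq_mul_div, ← add_div, eq_div_iff hD.ne']
      linear_combination keyeq
    · simp only [cseq, dseq]
      have : ∑ j ∈ Finset.Icc 1 (i+1), x j = Si + (aseq w k * u + bseq w k * Si) := by
        rw [hSsucc, eqA]
      linear_combination eqB + dseq w k * this

/-- lower bounds on the bids and the objective of any feasible solution
of the linear program `L_{m,u}`, with equality when the competitiveness constraints
beyond index `i` are tight. -/
theorem bidding_LP_main_lemma (w : ℝ) (hw : 4 ≤ w) (u : ℝ) (hu : 1 ≤ u)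
    (m : ℕ) (hm : 1 ≤ m)
    (x : ℕ → ℝ) (hx0 : x 0 = 1)
    (hxpos : ∀ i : ℕ, 1 ≤ i → i ≤ m → 0 ≤ x i)
    (hxm : x m = u)
    (hC : ∀ i : ℕ, 1 ≤ i → i ≤ m → ∑ j ∈ Finset.Icc 1 i, x j ≤ w * x (i - 1)) :
    ∀ i : ℕ, 1 ≤ i → i ≤ m →
      (x i ≥ aseq w (m - i) * u + bseq w (m - i) * ∑ j ∈ Finset.Icc 1 (i - 1), x j) ∧
      (∑ j ∈ Finset.Icc 1 m, x j
        ≥ cseq w (m - i) * u + dseq w (m - i) * ∑ j ∈ Finset.Icc 1 i, x j) ∧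
      ((∀ l : ℕ, i + 1 ≤ l → l ≤ m → ∑ j ∈ Finset.Icc 1 l, x j = w * x (l - 1)) →
        (x i = aseq w (m - i) * u + bseq w (m - i) * ∑ j ∈ Finset.Icc 1 (i - 1), x j) ∧
        (∑ j ∈ Finset.Icc 1 m, x j
          = cseq w (m - i) * u + dseq w (m - i) * ∑ j ∈ Finset.Icc 1 i, x j)) := by
  intro i hi him
  exact bidding_aux w hw u m x hxm hC (m - i) i hi (by omega)
end

section
/- Fix a real u ≥ 1 and an integer m ≥ 1. If there exists a sequence x : ℕ → ℝ with x(0) = 1, x(i) ≥ 0 for all 1 ≤ i ≤ m, x(m) = u, and ∑_{j=1}^{i} x(j) ≤ w·x(i−1) for every 1 ≤ i ≤ m, then a(m−1)·u ≤ w. -/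
/-!
Eliminate the bids from the last one backwards. Writing `S i = x 1 + ⋯ + x i`, the constraint
`S (i+1) ≤ w x i` is `x (i+1) ≤ w x i - S i`; substituting it `k` times into the last constraint
gives `a k · x (i+k+1) ≤ w x i - (1 + b k) S i`, the recursions for `a` and `b` being exactly
what keeps this shape, since `(1 + b (k+1)) (w - 1 - b k) = w`. At `i = 0` the right-hand side
is `w x 0 = w`.
-/

section
variable {w : ℝ}

lemma bseq_mem_Ico (hw : 4 ≤ w) (i : ℕ) : bseq w i ∈ Set.Ico 0 1 := by
  induction i with
  | zero => simp [bseq]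
  | succ n ih =>
    obtain ⟨hb0, hb1⟩ := ih
    have hden : 0 < w - 1 - bseq w n := by linarith
    refine ⟨div_nonneg (by linarith) hden.le, ?_⟩
    rw [bseq, div_lt_one hden]
    linarith

lemma sub_bseq_pos (hw : 4 ≤ w) (i : ℕ) : 0 < w - 1 - bseq w i := by
  have := (bseq_mem_Ico hw i).2
  linarith

lemma one_add_bseq_succ_mul (hw : 4 ≤ w) (k : ℕ) :
    (1 + bseq w (k + 1)) * (w - 1 - bseq w k) = w := by
  have hden := sub_bseq_pos hw k
  rw [bseq]
  field_simp
  ring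

lemma aseq_mul_le_of_sum_le (hw : 4 ≤ w) (x : ℕ → ℝ) (k i : ℕ)
    (hcon : ∀ j, 1 ≤ j → j ≤ i + k + 1 → ∑ l ∈ Finset.Icc 1 j, x l ≤ w * x (j - 1)) :
    aseq w k * x (i + k + 1) ≤ w * x i - (1 + bseq w k) * ∑ l ∈ Finset.Icc 1 i, x l := by
  induction k generalizing i with
  | zero =>
    have h := hcon (i + 1) (by omega) (by omega)
    rw [Finset.sum_Icc_succ_top (by omega), Nat.add_sub_cancel] at h
    simp only [aseq, bseq, add_zero]
    linarith
  | succ k ih =>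
    have hx : x (i + 1) ≤ w * x i - ∑ l ∈ Finset.Icc 1 i, x l := by
      have h := hcon (i + 1) (by omega) (by omega)
      rw [Finset.sum_Icc_succ_top (by omega), Nat.add_sub_cancel] at h
      linarith
    have hrest := ih (i + 1) fun j hj1 hj => hcon j hj1 (by omega)
    rw [show i + 1 + k + 1 = i + (k + 1) + 1 by omega, Finset.sum_Icc_succ_top (by omega)] at hrest
    have hden := sub_bseq_pos hw k
    have hkey := one_add_bseq_succ_mul hw k
    rw [aseq, div_mul_eq_mul_div, div_le_iff₀ hden]
    linear_combination hrest + mul_le_mul_of_nonneg_left hx hden.le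
      + (∑ l ∈ Finset.Icc 1 i, x l) * hkey

end

theorem bidding_LP_feasibility_general (w : ℝ) (hw : 4 ≤ w) (u : ℝ)
    (m : ℕ) (hm : 1 ≤ m)
    (hfeas : ∃ x : ℕ → ℝ, x 0 = 1 ∧ (∀ i : ℕ, 1 ≤ i → i ≤ m → 0 ≤ x i) ∧ x m = u ∧
      (∀ i : ℕ, 1 ≤ i → i ≤ m → ∑ j ∈ Finset.Icc 1 i, x j ≤ w * x (i - 1))) :
    aseq w (m - 1) * u ≤ w := by
  obtain ⟨x, hx0, -, hxm, hcon⟩ := hfeas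
  have h := aseq_mul_le_of_sum_le hw x (m - 1) 0 fun j hj1 hj => hcon j hj1 (by omega)
  rw [zero_add, Nat.sub_add_cancel hm, hxm, hx0] at h
  simpa using h

/-- if the linear program `L_{m,u}` is feasible then `a (m-1) * u ≤ w`. -/
theorem bidding_LP_feasibility (w : ℝ) (hw : 4 ≤ w) (u : ℝ) (hu : 1 ≤ u)
    (m : ℕ) (hm : 1 ≤ m)
    (hfeas : ∃ x : ℕ → ℝ, x 0 = 1 ∧ (∀ i : ℕ, 1 ≤ i → i ≤ m → 0 ≤ x i) ∧ x m = u ∧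
      (∀ i : ℕ, 1 ≤ i → i ≤ m → ∑ j ∈ Finset.Icc 1 i, x j ≤ w * x (i - 1))) :
    aseq w (m - 1) * u ≤ w :=
  bidding_LP_feasibility_general w hw u m hm hfeas
end

section
/- Assume w > 4, fix a real u ≥ 1 and an integer m ≥ 2, and define x* : ℕ⁺ → ℝ by x*(1) = a(m−1)·u and x*(i) = w·x*(i−1) − ∑_{j=1}^{i−1} x*(j) for i ≥ 2. Let ρ₁ = (w−√(w²−4w))/2 and ρ₂ = (w+√(w²−4w))/2 (the two roots of z²−wz+w = 0, with 1 < ρ₁ < ρ₂), and set α = u·(a(m−1)·ρ₂^{m−1}−1)/(ρ₂^{m−1}−ρ₁^{m−1}) and β = u·(a(m−1)·ρ₁^{m−1}−1)/(ρ₁^{m−1}−ρ₂^{m−1}). Then: (i) x*(i) = α·ρ₁^{i−1} + β·ρ₂^{i−1} for every i ≥ 1; (ii) β > 0 and α + β = a(m−1)·u > 0; (iii) x*(m) = u; (iv) x* is strictly increasing in i; and (v) x*(i) → +∞ as i → ∞. -/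
open Filter

section LinearRecurrence

variable {p q ρ₁ ρ₂ α β : ℝ}

theorem mul_pow_add_mul_pow_add_two (h₁ : ρ₁ ^ 2 = p * ρ₁ + q) (h₂ : ρ₂ ^ 2 = p * ρ₂ + q)
    (k : ℕ) :
    α * ρ₁ ^ (k + 2) + β * ρ₂ ^ (k + 2) =
      p * (α * ρ₁ ^ (k + 1) + β * ρ₂ ^ (k + 1)) + q * (α * ρ₁ ^ k + β * ρ₂ ^ k) := by
  linear_combination α * ρ₁ ^ k * h₁ + β * ρ₂ ^ k * h₂

theorem eq_of_linear_recurrence {y z : ℕ → ℝ} (hy : ∀ k, y (k + 2) = p * y (k + 1) + q * y k)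
    (hz : ∀ k, z (k + 2) = p * z (k + 1) + q * z k) (h₀ : y 0 = z 0) (h₁ : y 1 = z 1) :
    y = z := by
  funext k
  induction k using Nat.twoStepInduction with
  | zero => exact h₀
  | one => exact h₁
  | more k ih₀ ih₁ => rw [hy, hz, ih₀, ih₁]

theorem add_mul_pow_le_mul_pow_add_mul_pow (hβ : 0 ≤ β) (hρ₁ : 0 ≤ ρ₁) (hρ : ρ₁ ≤ ρ₂) (k : ℕ) :
    (α + β) * ρ₁ ^ k ≤ α * ρ₁ ^ k + β * ρ₂ ^ k := by
  nlinarith [mul_le_mul_of_nonneg_left (pow_le_pow_left₀ hρ₁ hρ k) hβ]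

theorem strictMono_mul_pow_add_mul_pow (hβ : 0 ≤ β) (hρ₁ : 1 ≤ ρ₁) (hρ : ρ₁ ≤ ρ₂)
    (hpos : 0 < α * (ρ₁ - 1) + β * (ρ₂ - 1)) :
    StrictMono fun k : ℕ => α * ρ₁ ^ k + β * ρ₂ ^ k := by
  refine strictMono_nat_of_lt_succ fun k => ?_
  have hstep := add_mul_pow_le_mul_pow_add_mul_pow (α := α * (ρ₁ - 1))
    (β := β * (ρ₂ - 1)) (mul_nonneg hβ (by linarith)) (by linarith) hρ k
  have : 0 < (α * (ρ₁ - 1) + β * (ρ₂ - 1)) * ρ₁ ^ k := by positivity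
  linear_combination hstep + this

theorem tendsto_mul_pow_add_mul_pow_atTop (hβ : 0 ≤ β) (hρ₁ : 1 < ρ₁) (hρ : ρ₁ ≤ ρ₂)
    (hαβ : 0 < α + β) : Tendsto (fun k : ℕ => α * ρ₁ ^ k + β * ρ₂ ^ k) atTop atTop :=
  tendsto_atTop_mono (add_mul_pow_le_mul_pow_add_mul_pow hβ (by linarith) hρ)
    ((tendsto_pow_atTop_atTop_of_one_lt hρ₁).const_mul_atTop hαβ)

end LinearRecurrence

section ClosedForms

variable {w : ℝ} {N : ℕ → ℝ}

theorem sub_one_sub_div_eq_div {n : ℕ} (hrec : N (n + 2) = w * N (n + 1) - w * N n)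
    (h : N (n + 1) - N n ≠ 0) :
    w - 1 - N n / (N (n + 1) - N n) = (N (n + 2) - N (n + 1)) / (N (n + 1) - N n) := by
  rw [eq_div_iff h, sub_mul, div_mul_cancel₀ _ h]
  linear_combination -hrec

theorem bseq_eq_div (hN₀ : N 0 = 0) (hrec : ∀ n, N (n + 2) = w * N (n + 1) - w * N n)
    (hN : StrictMono N) (n : ℕ) : bseq w n = N n / (N (n + 1) - N n) := by
  induction n with
  | zero => simp [bseq, hN₀]
  | succ n ih =>
    have h : N (n + 1) - N n ≠ 0 := (sub_pos.2 (hN n.lt_succ_self)).ne'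
    have hnum : 1 + N n / (N (n + 1) - N n) = N (n + 1) / (N (n + 1) - N n) := by
      field_simp
      ring
    rw [bseq, ih, hnum, sub_one_sub_div_eq_div (hrec n) h, div_div_div_cancel_right₀ h]

theorem aseq_eq_div (hN₀ : N 0 = 0) (hrec : ∀ n, N (n + 2) = w * N (n + 1) - w * N n)
    (hN : StrictMono N) (n : ℕ) : aseq w n = N 1 / (N (n + 1) - N n) := by
  induction n with
  | zero => simpa [aseq, hN₀] using (div_self (hN₀ ▸ hN zero_lt_one).ne').symm
  | succ n ih =>
    have h : N (n + 1) - N n ≠ 0 := (sub_pos.2 (hN n.lt_succ_self)).ne'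
    rw [aseq, ih, bseq_eq_div hN₀ hrec hN, sub_one_sub_div_eq_div (hrec n) h,
      div_div_div_cancel_right₀ h]

end ClosedForms

section Roots

variable {w ρ₁ ρ₂ : ℝ}

theorem sub_sqrt_div_two_sq (h : 0 ≤ w ^ 2 - 4 * w) :
    ((w - √(w ^ 2 - 4 * w)) / 2) ^ 2 = w * ((w - √(w ^ 2 - 4 * w)) / 2) - w := by
  linear_combination (1 / 4) * Real.sq_sqrt h

theorem add_sqrt_div_two_sq (h : 0 ≤ w ^ 2 - 4 * w) :
    ((w + √(w ^ 2 - 4 * w)) / 2) ^ 2 = w * ((w + √(w ^ 2 - 4 * w)) / 2) - w := by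
  linear_combination (1 / 4) * Real.sq_sqrt h

theorem one_lt_sub_sqrt_div_two (hw : 4 < w) : 1 < (w - √(w ^ 2 - 4 * w)) / 2 := by
  have : √(w ^ 2 - 4 * w) < w - 2 := (Real.sqrt_lt' (by linarith)).2 (by nlinarith)
  linarith

theorem sub_one_mul_pow_sub_sub_one_mul_pow_pos (hρ₁ : 1 ≤ ρ₁) (hρ : ρ₁ < ρ₂) (n : ℕ) :
    0 < (ρ₂ - 1) * ρ₂ ^ n - (ρ₁ - 1) * ρ₁ ^ n := by
  have := add_mul_pow_le_mul_pow_add_mul_pow (α := -(ρ₁ - 1)) (β := ρ₂ - 1) (by linarith)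
    (by linarith) hρ.le n
  have : 0 < (ρ₂ - ρ₁) * ρ₁ ^ n := mul_pos (by linarith) (by positivity)
  linarith

theorem aseq_eq_of_roots (h₁ : ρ₁ ^ 2 = w * ρ₁ - w) (h₂ : ρ₂ ^ 2 = w * ρ₂ - w) (hρ₁ : 1 ≤ ρ₁)
    (hρ : ρ₁ < ρ₂) (n : ℕ) :
    aseq w n = (ρ₂ - ρ₁) / ((ρ₂ - 1) * ρ₂ ^ n - (ρ₁ - 1) * ρ₁ ^ n) := by
  have hN := strictMono_mul_pow_add_mul_pow (α := -1) (β := 1) zero_le_one hρ₁ hρ.le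
    (by linarith)
  have hrec (n : ℕ) := mul_pow_add_mul_pow_add_two (ρ₁ := ρ₁) (ρ₂ := ρ₂) (α := -1) (β := 1)
    (p := w) (q := -w) (by linear_combination h₁) (by linear_combination h₂) n
  rw [aseq_eq_div (by simp) (fun n => by linear_combination hrec n) hN n]
  congr 1 <;> ring

theorem aseq_mul_eq_of_roots (h₁ : ρ₁ ^ 2 = w * ρ₁ - w) (h₂ : ρ₂ ^ 2 = w * ρ₂ - w)
    (hρ₁ : 1 ≤ ρ₁) (hρ : ρ₁ < ρ₂) (n : ℕ) :
    aseq w n * ((ρ₂ - 1) * ρ₂ ^ n - (ρ₁ - 1) * ρ₁ ^ n) = ρ₂ - ρ₁ := by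
  rw [aseq_eq_of_roots h₁ h₂ hρ₁ hρ,
    div_mul_cancel₀ _ (sub_one_mul_pow_sub_sub_one_mul_pow_pos hρ₁ hρ n).ne']

theorem aseq_pos_of_roots (h₁ : ρ₁ ^ 2 = w * ρ₁ - w) (h₂ : ρ₂ ^ 2 = w * ρ₂ - w)
    (hρ₁ : 1 ≤ ρ₁) (hρ : ρ₁ < ρ₂) (n : ℕ) : 0 < aseq w n := by
  rw [aseq_eq_of_roots h₁ h₂ hρ₁ hρ]
  exact div_pos (sub_pos.2 hρ) (sub_one_mul_pow_sub_sub_one_mul_pow_pos hρ₁ hρ n)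

theorem aseq_mul_pow_lt_one (h₁ : ρ₁ ^ 2 = w * ρ₁ - w) (h₂ : ρ₂ ^ 2 = w * ρ₂ - w)
    (hρ₁ : 1 ≤ ρ₁) (hρ : ρ₁ < ρ₂) {n : ℕ} (hn : n ≠ 0) : aseq w n * ρ₁ ^ n < 1 := by
  rw [aseq_eq_of_roots h₁ h₂ hρ₁ hρ, div_mul_eq_mul_div,
    div_lt_one (sub_one_mul_pow_sub_sub_one_mul_pow_pos hρ₁ hρ n)]
  nlinarith [pow_lt_pow_left₀ hρ (by linarith) hn]

end Roots

section PartialSumRecurrence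

variable {w ρ₁ ρ₂ α β : ℝ} {x : ℕ → ℝ}

theorem two_eq_of_eq_sub_sum
    (hx : ∀ i : ℕ, 2 ≤ i → x i = w * x (i - 1) - ∑ j ∈ Finset.Icc 1 (i - 1), x j) :
    x 2 = (w - 1) * x 1 := by
  have h := hx 2 le_rfl
  rw [show 2 - 1 = 1 from rfl, Finset.Icc_self, Finset.sum_singleton] at h
  linarith

theorem add_three_eq_of_eq_sub_sum
    (hx : ∀ i : ℕ, 2 ≤ i → x i = w * x (i - 1) - ∑ j ∈ Finset.Icc 1 (i - 1), x j) (k : ℕ) :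
    x (k + 3) = w * x (k + 2) - w * x (k + 1) := by
  have h₃ := hx (k + 3) (by omega)
  have h₂ := hx (k + 2) (by omega)
  rw [show k + 3 - 1 = k + 2 from rfl, Finset.sum_Icc_succ_top (by omega)] at h₃
  rw [show k + 2 - 1 = k + 1 from rfl] at h₂
  linarith

theorem eq_mul_pow_add_mul_pow_of_eq_sub_sum
    (hx : ∀ i : ℕ, 2 ≤ i → x i = w * x (i - 1) - ∑ j ∈ Finset.Icc 1 (i - 1), x j)
    (h₁ : ρ₁ ^ 2 = w * ρ₁ - w) (h₂ : ρ₂ ^ 2 = w * ρ₂ - w) (hx₁ : x 1 = α + β)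
    (hx₂ : (w - 1) * x 1 = α * ρ₁ + β * ρ₂) (k : ℕ) :
    x (k + 1) = α * ρ₁ ^ k + β * ρ₂ ^ k := by
  refine congrFun (eq_of_linear_recurrence (y := fun k => x (k + 1))
    (z := fun k => α * ρ₁ ^ k + β * ρ₂ ^ k) (p := w) (q := -w) (fun k => ?_)
    (mul_pow_add_mul_pow_add_two (by linear_combination h₁) (by linear_combination h₂))
    (by simpa using hx₁) (by simpa [two_eq_of_eq_sub_sum hx] using hx₂)) k
  linear_combination add_three_eq_of_eq_sub_sum hx k

end PartialSumRecurrence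

section Coefficients

variable {ρ₁ ρ₂ P Q A u α β : ℝ}

theorem coeff_add_coeff_eq (hPQ : P ≠ Q) (hα : α = u * (A * Q - 1) / (Q - P))
    (hβ : β = u * (A * P - 1) / (P - Q)) : α + β = A * u := by
  have hα' : α * (Q - P) = u * (A * Q - 1) := hα ▸ div_mul_cancel₀ _ (sub_ne_zero.2 hPQ.symm)
  have hβ' : β * (P - Q) = u * (A * P - 1) := hβ ▸ div_mul_cancel₀ _ (sub_ne_zero.2 hPQ)
  exact mul_right_cancel₀ (sub_ne_zero.2 hPQ.symm) (by linear_combination hα' - hβ')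

theorem coeff_mul_add_coeff_mul_eq (hPQ : P ≠ Q) (hα : α = u * (A * Q - 1) / (Q - P))
    (hβ : β = u * (A * P - 1) / (P - Q)) : α * P + β * Q = u := by
  have hα' : α * (Q - P) = u * (A * Q - 1) := hα ▸ div_mul_cancel₀ _ (sub_ne_zero.2 hPQ.symm)
  have hβ' : β * (P - Q) = u * (A * P - 1) := hβ ▸ div_mul_cancel₀ _ (sub_ne_zero.2 hPQ)
  exact mul_right_cancel₀ (sub_ne_zero.2 hPQ.symm) (by linear_combination P * hα' - Q * hβ')

theorem coeff_mul_root_add_coeff_mul_root_eq (hPQ : P ≠ Q) (hα : α = u * (A * Q - 1) / (Q - P))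
    (hβ : β = u * (A * P - 1) / (P - Q)) (hA : A * ((ρ₂ - 1) * Q - (ρ₁ - 1) * P) = ρ₂ - ρ₁) :
    α * ρ₁ + β * ρ₂ = (ρ₁ + ρ₂ - 1) * (A * u) := by
  have hα' : α * (Q - P) = u * (A * Q - 1) := hα ▸ div_mul_cancel₀ _ (sub_ne_zero.2 hPQ.symm)
  have hβ' : β * (P - Q) = u * (A * P - 1) := hβ ▸ div_mul_cancel₀ _ (sub_ne_zero.2 hPQ)
  exact mul_right_cancel₀ (sub_ne_zero.2 hPQ.symm)
    (by linear_combination ρ₁ * hα' - ρ₂ * hβ' - u * hA)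

theorem coeff_pos (hu : 0 < u) (hPQ : P < Q) (hAP : A * P < 1)
    (hβ : β = u * (A * P - 1) / (P - Q)) : 0 < β :=
  hβ ▸ div_pos_of_neg_of_neg (mul_neg_of_pos_of_neg hu (by linarith)) (by linarith)

end Coefficients

/-- closed form and properties of the optimal bid sequence `x*` when `w > 4`. -/
theorem xstar_closed_form_w_gt_four (w : ℝ) (hw : 4 < w) (u : ℝ) (hu : 1 ≤ u)
    (m : ℕ) (hm : 2 ≤ m)
    (x : ℕ → ℝ) (hx1 : x 1 = aseq w (m - 1) * u)
    (hxrec : ∀ i : ℕ, 2 ≤ i → x i = w * x (i - 1) - ∑ j ∈ Finset.Icc 1 (i - 1), x j)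
    (ρ₁ ρ₂ : ℝ)
    (hρ₁ : ρ₁ = (w - Real.sqrt (w ^ 2 - 4 * w)) / 2)
    (hρ₂ : ρ₂ = (w + Real.sqrt (w ^ 2 - 4 * w)) / 2)
    (α β : ℝ)
    (hα : α = u * (aseq w (m - 1) * ρ₂ ^ (m - 1) - 1) / (ρ₂ ^ (m - 1) - ρ₁ ^ (m - 1)))
    (hβ : β = u * (aseq w (m - 1) * ρ₁ ^ (m - 1) - 1) / (ρ₁ ^ (m - 1) - ρ₂ ^ (m - 1))) :
    (∀ i : ℕ, 1 ≤ i → x i = α * ρ₁ ^ (i - 1) + β * ρ₂ ^ (i - 1)) ∧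
    (0 < β ∧ α + β = aseq w (m - 1) * u ∧ 0 < aseq w (m - 1) * u) ∧
    x m = u ∧
    (∀ i : ℕ, 1 ≤ i → x i < x (i + 1)) ∧
    Filter.Tendsto x Filter.atTop Filter.atTop := by
  have hD : 0 < w ^ 2 - 4 * w := by nlinarith
  have hsum : ρ₁ + ρ₂ = w := by rw [hρ₁, hρ₂]; ring
  have hq₁ : ρ₁ ^ 2 = w * ρ₁ - w := hρ₁ ▸ sub_sqrt_div_two_sq hD.le
  have hq₂ : ρ₂ ^ 2 = w * ρ₂ - w := hρ₂ ▸ add_sqrt_div_two_sq hD.le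
  have h1ρ₁ : 1 < ρ₁ := hρ₁ ▸ one_lt_sub_sqrt_div_two hw
  have hρ : ρ₁ < ρ₂ := by rw [hρ₁, hρ₂]; linarith [Real.sqrt_pos.2 hD]
  obtain ⟨n, rfl⟩ : ∃ n, m = n + 2 := ⟨m - 2, by omega⟩
  rw [show n + 2 - 1 = n + 1 from rfl] at hα hβ hx1 ⊢
  have hA := aseq_mul_eq_of_roots hq₁ hq₂ h1ρ₁.le hρ (n + 1)
  have hAu : 0 < aseq w (n + 1) * u :=
    mul_pos (aseq_pos_of_roots hq₁ hq₂ h1ρ₁.le hρ _) (by linarith)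
  have hPQ : ρ₁ ^ (n + 1) < ρ₂ ^ (n + 1) := pow_lt_pow_left₀ hρ (by linarith) n.add_one_ne_zero
  have hαβ := coeff_add_coeff_eq hPQ.ne hα hβ
  have hαβρ : α * ρ₁ + β * ρ₂ = (w - 1) * (aseq w (n + 1) * u) :=
    (coeff_mul_root_add_coeff_mul_root_eq hPQ.ne hα hβ hA).trans (by rw [hsum])
  have hβ₀ : 0 < β := coeff_pos (by linarith) hPQ
    (aseq_mul_pow_lt_one hq₁ hq₂ h1ρ₁.le hρ n.add_one_ne_zero) hβ
  have hclosed (k : ℕ) : x (k + 1) = α * ρ₁ ^ k + β * ρ₂ ^ k :=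
    eq_mul_pow_add_mul_pow_of_eq_sub_sum hxrec hq₁ hq₂ (hx1.trans hαβ.symm)
      (by rw [hx1, hαβρ]) k
  refine ⟨fun i hi => ?_, ⟨hβ₀, hαβ, hAu⟩, ?_, fun i hi => ?_, ?_⟩
  · obtain ⟨k, rfl⟩ := Nat.exists_eq_add_of_le' hi
    exact hclosed k
  · rw [hclosed, coeff_mul_add_coeff_mul_eq hPQ.ne hα hβ]
  · obtain ⟨k, rfl⟩ := Nat.exists_eq_add_of_le' hi
    rw [hclosed, hclosed]
    exact strictMono_mul_pow_add_mul_pow hβ₀.le h1ρ₁.le hρ.le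
      (by linarith [mul_pos (by linarith : (0 : ℝ) < w - 2) hAu]) k.lt_succ_self
  · rw [← tendsto_add_atTop_iff_nat 1, funext hclosed]
    exact tendsto_mul_pow_add_mul_pow_atTop hβ₀.le h1ρ₁ hρ.le (hαβ ▸ hAu)
end

section
/- The sequence c is strictly increasing, c(i) < (w−√(w²−4w))/2 for every i ≥ 0, and c(i) → (w−√(w²−4w))/2 as i → ∞. Equivalently, the series 1 + ∑_{i=1}^{∞} ∏_{j=1}^{i} b(j) converges and its sum equals (w−√(w²−4w))/2. -/
/-!
Let `p` be the smaller root of `x² - (w - 2) x + 1` and `S m = 1 + p + ⋯ + p ^ (m - 1)`.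
All four sequences have closed forms: `b m = p S m / S (m + 2)`,
`d m a m = (1 + p) p ^ m / (S (m + 1) S (m + 2))` and `c m = (1 + p) S m / S (m + 1)`, the last
one because the Cassini-type identity `S (m + 1)² = S m S (m + 2) + p ^ m` makes the increments
`d m a m` telescope. As `p ≤ 1`, the last term `p ^ m` of `S (m + 1)` is at most `S (m + 1) / (m + 1)`,
so `S m / S (m + 1) → 1` and `c m` increases to `1 + p = (w - √(w² - 4w)) / 2`. The series is the
same limit, since `∏_{1 ≤ j ≤ m} b j = d m a m = c (m + 1) - c m`.
-/

open Finset Filter Topology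

noncomputable def partialGeomSum (p : ℝ) (m : ℕ) : ℝ := ∑ i ∈ range m, p ^ i

section PartialGeomSum

variable {p : ℝ}

@[simp]
theorem partialGeomSum_zero : partialGeomSum p 0 = 0 := rfl

@[simp]
theorem partialGeomSum_one : partialGeomSum p 1 = 1 := by simp [partialGeomSum]

theorem partialGeomSum_succ (m : ℕ) : partialGeomSum p (m + 1) = partialGeomSum p m + p ^ m :=
  sum_range_succ _ _

theorem partialGeomSum_succ' (m : ℕ) : partialGeomSum p (m + 1) = 1 + p * partialGeomSum p m :=
  geom_sum_succ.trans (add_comm _ _)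

theorem partialGeomSum_pos (hp : 0 ≤ p) (m : ℕ) : 0 < partialGeomSum p (m + 1) :=
  geom_sum_pos hp m.succ_ne_zero

theorem sq_partialGeomSum_succ (m : ℕ) :
    partialGeomSum p (m + 1) ^ 2 = partialGeomSum p m * partialGeomSum p (m + 2) + p ^ m := by
  rw [partialGeomSum_succ' (m + 1)]
  linear_combination partialGeomSum p (m + 1) * partialGeomSum_succ' (p := p) m
    + partialGeomSum_succ (p := p) m

theorem mul_pow_le_partialGeomSum (hp₀ : 0 ≤ p) (hp₁ : p ≤ 1) (n : ℕ) :
    (n + 1) * p ^ n ≤ partialGeomSum p (n + 1) := by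
  have h := sum_le_sum fun i (hi : i ∈ range (n + 1)) =>
    pow_le_pow_of_le_one hp₀ hp₁ (mem_range_succ_iff.mp hi)
  simpa [partialGeomSum, add_comm] using h

theorem tendsto_partialGeomSum_div_succ (hp₀ : 0 ≤ p) (hp₁ : p ≤ 1) :
    Tendsto (fun n => partialGeomSum p n / partialGeomSum p (n + 1)) atTop (𝓝 1) := by
  have h_last : Tendsto (fun n => p ^ n / partialGeomSum p (n + 1)) atTop (𝓝 0) := by
    refine squeeze_zero (fun n => div_nonneg (pow_nonneg hp₀ n) (partialGeomSum_pos hp₀ n).le)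
      (fun n => ?_) tendsto_one_div_add_atTop_nhds_zero_nat
    rw [div_le_div_iff₀ (partialGeomSum_pos hp₀ n) (by positivity)]
    linarith [mul_pow_le_partialGeomSum hp₀ hp₁ n]
  have h_eq : ∀ n, partialGeomSum p n / partialGeomSum p (n + 1)
      = 1 - p ^ n / partialGeomSum p (n + 1) := fun n => by
    rw [eq_sub_iff_add_eq, ← add_div, ← partialGeomSum_succ,
      div_self (partialGeomSum_pos hp₀ n).ne']
  simpa [h_eq] using h_last.const_sub 1

end PartialGeomSum

theorem dseq_mul_aseq_succ (w : ℝ) (m : ℕ) :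
    dseq w (m + 1) * aseq w (m + 1) = dseq w m * aseq w m * bseq w (m + 1) := by
  rw [dseq, aseq, bseq]
  ring

theorem prod_Icc_bseq (w : ℝ) (m : ℕ) : ∏ j ∈ Icc 1 m, bseq w j = dseq w m * aseq w m := by
  induction m with
  | zero => simp [dseq, aseq]
  | succ m ih => rw [prod_Icc_succ_top (by omega), ih, dseq_mul_aseq_succ]

theorem sum_range_prod_Icc_bseq (w : ℝ) (n : ℕ) :
    ∑ i ∈ range n, ∏ j ∈ Icc 1 (i + 1), bseq w j = cseq w (n + 1) - 1 := by
  induction n with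
  | zero => simp [cseq, dseq, aseq]
  | succ n ih => rw [sum_range_succ, ih, prod_Icc_bseq, cseq.eq_2 w (n + 1)]; ring

section ClosedForms

variable {w p : ℝ}

theorem bseq_eq_of_root (hp : 0 < p) (hpw : p ^ 2 + 1 = (w - 2) * p) (m : ℕ) :
    bseq w m = p * partialGeomSum p m / partialGeomSum p (m + 2) := by
  induction m with
  | zero => simp [bseq]
  | succ m ih =>
    have hS₂ := (partialGeomSum_pos hp.le (m + 1)).ne'
    have hS₃ := (partialGeomSum_pos hp.le (m + 2)).ne'
    have h_num : 1 + bseq w m = (1 + p) * partialGeomSum p (m + 1) / partialGeomSum p (m + 2) := by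
      rw [ih]
      field_simp
      linear_combination partialGeomSum_succ' (p := p) (m + 1) - partialGeomSum_succ' (p := p) m
    have h_den : w - 1 - bseq w m
        = (1 + p) * partialGeomSum p (m + 3) / (p * partialGeomSum p (m + 2)) := by
      rw [ih]
      field_simp
      rw [partialGeomSum_succ (m + 2), partialGeomSum_succ (m + 1), partialGeomSum_succ m]
      linear_combination -(partialGeomSum p m + p ^ m + p ^ (m + 1)) * hpw
    rw [bseq, h_num, h_den]
    field_simp

theorem dseq_mul_aseq_eq_of_root (hp : 0 < p) (hpw : p ^ 2 + 1 = (w - 2) * p) (m : ℕ) :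
    dseq w m * aseq w m
      = (1 + p) * p ^ m / (partialGeomSum p (m + 1) * partialGeomSum p (m + 2)) := by
  induction m with
  | zero =>
    simp only [dseq, aseq, mul_one, pow_zero, zero_add, partialGeomSum_one, partialGeomSum_succ' 1,
      one_mul]
    field_simp
  | succ m ih =>
    have hS₁ := (partialGeomSum_pos hp.le m).ne'
    have hS₂ := (partialGeomSum_pos hp.le (m + 1)).ne'
    have hS₃ := (partialGeomSum_pos hp.le (m + 2)).ne'
    rw [dseq_mul_aseq_succ, ih, bseq_eq_of_root hp hpw]
    field_simp
    ring

theorem dseq_mul_aseq_pos (hp : 0 < p) (hpw : p ^ 2 + 1 = (w - 2) * p) (m : ℕ) :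
    0 < dseq w m * aseq w m := by
  have := partialGeomSum_pos hp.le m
  have := partialGeomSum_pos hp.le (m + 1)
  rw [dseq_mul_aseq_eq_of_root hp hpw]
  positivity

theorem cseq_eq_of_root (hp : 0 < p) (hpw : p ^ 2 + 1 = (w - 2) * p) (m : ℕ) :
    cseq w m = (1 + p) * partialGeomSum p m / partialGeomSum p (m + 1) := by
  induction m with
  | zero => simp [cseq]
  | succ m ih =>
    have hS₁ := (partialGeomSum_pos hp.le m).ne'
    have hS₂ := (partialGeomSum_pos hp.le (m + 1)).ne'
    rw [cseq, ih, dseq_mul_aseq_eq_of_root hp hpw]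
    field_simp
    linear_combination -sq_partialGeomSum_succ (p := p) m

theorem cseq_strictMono_of_root (hp : 0 < p) (hpw : p ^ 2 + 1 = (w - 2) * p) :
    StrictMono (cseq w) :=
  strictMono_nat_of_lt_succ fun n => by
    rw [cseq]
    linarith [dseq_mul_aseq_pos hp hpw n]

theorem cseq_lt_of_root (hp : 0 < p) (hpw : p ^ 2 + 1 = (w - 2) * p) (m : ℕ) :
    cseq w m < 1 + p := by
  have hS := partialGeomSum_pos hp.le m
  rw [cseq_eq_of_root hp hpw, div_lt_iff₀ hS, partialGeomSum_succ]
  nlinarith [pow_pos hp m]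

theorem tendsto_cseq_of_root (hp : 0 < p) (hp₁ : p ≤ 1) (hpw : p ^ 2 + 1 = (w - 2) * p) :
    Tendsto (cseq w) atTop (𝓝 (1 + p)) := by
  have h := (tendsto_partialGeomSum_div_succ hp.le hp₁).const_mul (1 + p)
  rw [mul_one] at h
  exact h.congr fun m => by rw [cseq_eq_of_root hp hpw, mul_div_assoc]

theorem hasSum_prod_Icc_bseq_of_root (hp : 0 < p) (hp₁ : p ≤ 1)
    (hpw : p ^ 2 + 1 = (w - 2) * p) :
    HasSum (fun i => ∏ j ∈ Icc 1 (i + 1), bseq w j) p := by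
  have h_nonneg i : 0 ≤ ∏ j ∈ Icc 1 (i + 1), bseq w j :=
    prod_Icc_bseq w (i + 1) ▸ (dseq_mul_aseq_pos hp hpw (i + 1)).le
  rw [hasSum_iff_tendsto_nat_of_nonneg h_nonneg]
  have h := ((tendsto_cseq_of_root hp hp₁ hpw).comp (tendsto_add_atTop_nat 1)).sub_const 1
  rw [add_sub_cancel_left] at h
  exact h.congr fun n => (sum_range_prod_Icc_bseq w n).symm

end ClosedForms

noncomputable def smallRoot (w : ℝ) : ℝ := (w - 2 - √(w ^ 2 - 4 * w)) / 2

section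

variable {w : ℝ}

theorem smallRoot_sq_add_one (hw : 4 ≤ w) : smallRoot w ^ 2 + 1 = (w - 2) * smallRoot w := by
  have h := Real.sq_sqrt (show 0 ≤ w ^ 2 - 4 * w by nlinarith)
  unfold smallRoot
  linear_combination h / 4

theorem smallRoot_pos (hw : 4 ≤ w) : 0 < smallRoot w := by
  have h := Real.sq_sqrt (show 0 ≤ w ^ 2 - 4 * w by nlinarith)
  unfold smallRoot
  nlinarith [Real.sqrt_nonneg (w ^ 2 - 4 * w)]

theorem smallRoot_le_one (hw : 4 ≤ w) : smallRoot w ≤ 1 := by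
  have h := Real.sq_sqrt (show 0 ≤ w ^ 2 - 4 * w by nlinarith)
  unfold smallRoot
  nlinarith [Real.sqrt_nonneg (w ^ 2 - 4 * w)]

end

/-- the sequence `c` strictly increases to `(w - √(w² - 4w)) / 2`;
equivalently, `1 + ∑_{i=1}^∞ ∏_{j=1}^{i} b j = (w - √(w² - 4w)) / 2`. -/
theorem cseq_tendsto_optimal_ratio (w : ℝ) (hw : 4 ≤ w) :
    StrictMono (cseq w) ∧
    (∀ i : ℕ, cseq w i < (w - Real.sqrt (w ^ 2 - 4 * w)) / 2) ∧
    Filter.Tendsto (cseq w) Filter.atTop (nhds ((w - Real.sqrt (w ^ 2 - 4 * w)) / 2)) ∧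
    Summable (fun i : ℕ => ∏ j ∈ Finset.Icc 1 (i + 1), bseq w j) ∧
    1 + ∑' i : ℕ, ∏ j ∈ Finset.Icc 1 (i + 1), bseq w j
      = (w - Real.sqrt (w ^ 2 - 4 * w)) / 2 := by
  have hp := smallRoot_pos hw
  have hp₁ := smallRoot_le_one hw
  have hpw := smallRoot_sq_add_one hw
  have h_limit : (w - √(w ^ 2 - 4 * w)) / 2 = 1 + smallRoot w := by unfold smallRoot; ring
  have h_sum := hasSum_prod_Icc_bseq_of_root hp hp₁ hpw
  rw [h_limit]
  exact ⟨cseq_strictMono_of_root hp hpw, cseq_lt_of_root hp hpw,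
    tendsto_cseq_of_root hp hp₁ hpw, h_sum.summable, by rw [h_sum.tsum_eq]⟩
end

section
/- For all reals K ≥ 1 and ρ > 1, it holds that ρ^{1+1/K}/(ρ−1) ≥ (1+K)^{1+1/K}/K, where z^{1+1/K} denotes the real power of the positive real z. In particular, over ρ > 1 the function ρ ↦ ρ^{1+1/K}/(ρ−1) attains its minimum value (1+K)^{1+1/K}/K at ρ = 1+K. -/
/-! Bernoulli's inequality at the point `ρ / (1 + K)`, with exponent `p = 1 + 1/K`, gives
`(ρ / (1 + K)) ^ p ≥ 1 + p (ρ / (1 + K) - 1) = (ρ - 1) / K`, since `p / (1 + K) = 1 / K`.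
Equality holds at `ρ = 1 + K`. -/

lemma sub_one_div_le_rpow_div_one_add {K ρ : ℝ} (hK : 0 < K) (hρ : 0 ≤ ρ) :
    (ρ - 1) / K ≤ (ρ / (1 + K)) ^ (1 + 1 / K) := by
  have hbase : -1 ≤ ρ / (1 + K) - 1 := by
    have : 0 ≤ ρ / (1 + K) := by positivity
    linarith
  have hexp : 1 ≤ 1 + 1 / K := le_add_of_nonneg_right (by positivity)
  have hbernoulli := one_add_mul_self_le_rpow_one_add hbase hexp
  have hlhs : 1 + (1 + 1 / K) * (ρ / (1 + K) - 1) = (ρ - 1) / K := by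
    field_simp
    ring
  rwa [hlhs, add_sub_cancel] at hbernoulli

/-- for `K ≥ 1`, the function `ρ ↦ ρ^(1+1/K) / (ρ - 1)` on `ρ > 1`
is minimized at `ρ = 1 + K`, with minimum value `(1+K)^(1+1/K) / K`. -/
theorem rpow_ratio_min (K ρ : ℝ) (hK : 1 ≤ K) (hρ : 1 < ρ) :
    ρ ^ (1 + 1 / K) / (ρ - 1) ≥ (1 + K) ^ (1 + 1 / K) / K := by
  have hK0 : 0 < K := by linarith
  have hbound := sub_one_div_le_rpow_div_one_add hK0 (by linarith : 0 ≤ ρ)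
  rw [Real.div_rpow (by linarith) (by linarith), div_le_div_iff₀ hK0 (by positivity)] at hbound
  rw [ge_iff_le, div_le_div_iff₀ hK0 (by linarith)]
  linarith
end

section
/- Fix a real w ≥ 4 and an integer k ≥ 0, and let K = 2^k. Define r = (w+√(w²−4w))^{1+1/K}/(2^{1/K}·(w+√(w²−4w)−2)) if w ≤ (1+K)²/K, and r = (1+K)^{1+1/K}/K if w ≥ (1+K)²/K (real powers of positive reals). Then there exist K online bidding strategies X_a : ℕ → ℝ, indexed by a ∈ {0,…,K−1} (each with X_a(0) = 1, strictly increasing, and tending to +∞), together with an advice function adv : {u : ℝ | u ≥ 1} → {0,…,K−1}, such that: (i) for every a and every u ≥ 1, cost(X_a, u) ≤ w·u; and (ii) for every u ≥ 1, cost(X_{adv(u)}, u) ≤ r·u. That is, with k bits of advice there is an (r, w)-competitive bidding strategy. -/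
open scoped Classical in
/-- The cost of a bidding strategy `x` on a hidden value `u`: the sum
`∑_{j=1}^{i} x j` where `i` is the least index with `x i ≥ u` (and `0` if no
such index exists, which never happens for strategies tending to infinity). -/
noncomputable def bidCost (x : ℕ → ℝ) (u : ℝ) : ℝ :=
  if h : ∃ i : ℕ, u ≤ x i then ∑ j ∈ Finset.Icc 1 (Nat.find h), x j else 0

/-!
Fix `β > 1` and put `q = β ^ (1/K)`, `r = q β / (β - 1)`. Strategy `a < K` bids
`1, r qᵃ, r qᵃ β, r qᵃ β², …`; bid `m / K + 1` of strategy `m % K` is `r qᵐ`, so together the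
strategies bid on the grid `(r qᵐ)ₘ`. Each strategy is geometric with ratio `β` and first bid
at most `β² / (β - 1)`, hence `β² / (β - 1)`-competitive. The advice names the strategy owning the
first grid point `r qᵐ ≥ u`; its cost is at most `r qᵐ β / (β - 1) = r · r q^(m-1) < r u`.
Since `β ^ (1 + 1/K) / (β - 1)` decreases on `(1, 1 + K]` and increases afterwards, the best
admissible choice (`β² / (β - 1) ≤ w`) is `β = 1 + K` when allowed, and otherwise the larger root
of `β² = w (β - 1)`.
-/

open Finset Filter

theorem bidCost_le_sum_Icc {x : ℕ → ℝ} {u : ℝ} {i : ℕ} (hx : ∀ j, 0 ≤ x j) (hi : u ≤ x i) :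
    bidCost x u ≤ ∑ j ∈ Icc 1 i, x j := by
  have h : ∃ i, u ≤ x i := ⟨i, hi⟩
  rw [bidCost, dif_pos h]
  exact sum_le_sum_of_subset_of_nonneg (Icc_subset_Icc_right (Nat.find_min' h hi))
    fun j _ _ => hx j

theorem bidCost_le_of_sum_le {x : ℕ → ℝ} {C u : ℝ} (hC : 0 ≤ C) (hu : 0 ≤ u)
    (hsum : ∀ i, ∑ j ∈ Icc 1 (i + 1), x j ≤ C * x i) : bidCost x u ≤ C * u := by
  unfold bidCost
  split_ifs with h
  · cases hi : Nat.find h with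
    | zero =>
      simp only [Icc_eq_empty_of_lt zero_lt_one, sum_empty]
      positivity
    | succ i =>
      have hxi : x i < u := not_le.mp (Nat.find_min h (by omega))
      exact (hsum i).trans (by gcongr)
  · positivity

theorem geom_sum_le_pow_div {β : ℝ} (hβ : 1 < β) (n : ℕ) :
    ∑ j ∈ range n, β ^ j ≤ β ^ n / (β - 1) := by
  rw [geom_sum_eq hβ.ne']
  gcongr
  linarith

def geomBid (c β : ℝ) (j : ℕ) : ℝ := if j = 0 then 1 else c * β ^ (j - 1)

section geomBid

variable {c β : ℝ}

@[simp] theorem geomBid_zero : geomBid c β 0 = 1 := rfl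

@[simp] theorem geomBid_succ (j : ℕ) : geomBid c β (j + 1) = c * β ^ j := rfl

theorem geomBid_nonneg (hc : 0 ≤ c) (hβ : 0 ≤ β) (j : ℕ) : 0 ≤ geomBid c β j := by
  cases j <;> simp only [geomBid_zero, geomBid_succ] <;> positivity

theorem geomBid_strictMono (hc : 1 < c) (hβ : 1 < β) : StrictMono (geomBid c β) := by
  refine strictMono_nat_of_lt_succ fun j => ?_
  cases j with
  | zero => simpa using hc
  | succ j =>
    simp only [geomBid_succ, pow_succ]
    have : 0 < c * β ^ j := by positivity
    nlinarith

theorem tendsto_geomBid (hc : 0 < c) (hβ : 1 < β) : Tendsto (geomBid c β) atTop atTop := by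
  rw [← tendsto_add_atTop_iff_nat 1]
  simpa only [geomBid_succ] using (tendsto_pow_atTop_atTop_of_one_lt hβ).const_mul_atTop hc

theorem sum_Icc_geomBid (n : ℕ) : ∑ j ∈ Icc 1 n, geomBid c β j = c * ∑ j ∈ range n, β ^ j := by
  induction n with
  | zero => simp
  | succ n ih => rw [sum_Icc_succ_top (by omega), ih, sum_range_succ, geomBid_succ, mul_add]

theorem bidCost_geomBid_le {u : ℝ} (hβ : 1 < β) (hc : 0 ≤ c) (hcβ : c ≤ β ^ 2 / (β - 1))
    (hu : 0 ≤ u) : bidCost (geomBid c β) u ≤ β ^ 2 / (β - 1) * u := by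
  have hβ1 : 0 < β - 1 := by linarith
  refine bidCost_le_of_sum_le (by positivity) hu fun i => ?_
  rw [sum_Icc_geomBid]
  cases i with
  | zero => simpa using hcβ
  | succ i =>
    calc c * ∑ j ∈ range (i + 1 + 1), β ^ j ≤ c * (β ^ (i + 1 + 1) / (β - 1)) := by
          gcongr
          exact geom_sum_le_pow_div hβ _
      _ = β ^ 2 / (β - 1) * geomBid c β (i + 1) := by
          rw [geomBid_succ]
          ring

theorem geomBid_mod_div_add_one {q : ℝ} {n : ℕ} (hqn : q ^ n = β) (r : ℝ) (m : ℕ) :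
    geomBid (r * q ^ (m % n)) β (m / n + 1) = r * q ^ m := by
  rw [geomBid_succ, ← hqn, ← pow_mul, mul_assoc, ← pow_add, Nat.mod_add_div]

theorem bidCost_geomBid_mod_le {q r u : ℝ} {n m : ℕ} (hq : 0 < q) (hβ : 1 < β)
    (hqn : q ^ n = β) (hr : r = q * β / (β - 1)) (hu : 1 ≤ u) (hm : u ≤ r * q ^ m)
    (hmin : ∀ m' < m, r * q ^ m' < u) :
    bidCost (geomBid (r * q ^ (m % n)) β) u ≤ r * u := by
  have hβ1 : 0 < β - 1 := by linarith
  have hr0 : 0 < r := by rw [hr]; positivity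
  have hcost := bidCost_le_sum_Icc (geomBid_nonneg (by positivity) (by positivity))
    ((geomBid_mod_div_add_one hqn r m).ge.trans' hm)
  rw [sum_Icc_geomBid] at hcost
  refine hcost.trans ?_
  cases m with
  | zero => simpa using le_mul_of_one_le_right hr0.le hu
  | succ m =>
    have hbid : r * q ^ (m + 1) = r * q ^ ((m + 1) % n) * β ^ ((m + 1) / n) := by
      rw [← geomBid_mod_div_add_one hqn r (m + 1), geomBid_succ]
    calc r * q ^ ((m + 1) % n) * ∑ j ∈ range ((m + 1) / n + 1), β ^ j
        ≤ r * q ^ ((m + 1) % n) * (β ^ ((m + 1) / n + 1) / (β - 1)) := by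
          gcongr
          exact geom_sum_le_pow_div hβ _
      _ = r * q ^ ((m + 1) % n) * β ^ ((m + 1) / n) * (β / (β - 1)) := by
          rw [pow_succ]
          ring
      _ = r * q ^ m * r := by
          rw [← hbid, pow_succ, hr]
          ring
      _ ≤ r * u := by
          rw [mul_comm r u]
          gcongr
          exact (hmin m m.lt_succ_self).le

end geomBid

theorem exists_competitive_advice_strategies (n : ℕ) (hn : 0 < n) {β : ℝ} (hβ : 1 < β) :
    ∃ (X : Fin n → ℕ → ℝ) (adv : ℝ → Fin n),
      (∀ a, X a 0 = 1 ∧ StrictMono (X a) ∧ Tendsto (X a) atTop atTop) ∧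
      (∀ a u, 1 ≤ u → bidCost (X a) u ≤ β ^ 2 / (β - 1) * u) ∧
      (∀ u, 1 ≤ u → bidCost (X (adv u)) u ≤ β ^ (1 + 1 / (n : ℝ)) / (β - 1) * u) := by
  have hn' : (0 : ℝ) < n := by exact_mod_cast hn
  have hβ1 : 0 < β - 1 := by linarith
  set q := β ^ (1 / (n : ℝ))
  have hq : 1 < q := Real.one_lt_rpow hβ (by positivity)
  have hqn : q ^ n = β := by
    rw [← Real.rpow_natCast, ← Real.rpow_mul (by linarith), one_div_mul_cancel hn'.ne',
      Real.rpow_one]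
  set r := q * β / (β - 1) with hr
  have hrβ : β ^ (1 + 1 / (n : ℝ)) / (β - 1) = r := by
    rw [Real.rpow_add (by linarith), Real.rpow_one, mul_comm]
  have hr1 : 1 < r := by
    rw [hr, lt_div_iff₀ hβ1]
    nlinarith
  have hgrid : ∀ u : ℝ, ∃ m, u ≤ r * q ^ m := fun u =>
    (pow_unbounded_of_one_lt u hq).imp fun m hm =>
      hm.le.trans (le_mul_of_one_le_left (by positivity) hr1.le)
  refine ⟨fun a => geomBid (r * q ^ (a : ℕ)) β,
    fun u => ⟨Nat.find (hgrid u) % n, Nat.mod_lt _ hn⟩,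
    fun a => ⟨rfl, geomBid_strictMono ?_ hβ, tendsto_geomBid (by positivity) hβ⟩,
    fun a u hu => bidCost_geomBid_le hβ (by positivity) ?_ (by linarith),
    fun u hu => ?_⟩
  · exact one_lt_mul_of_lt_of_le hr1 (one_le_pow₀ hq.le)
  · calc r * q ^ (a : ℕ) ≤ r * q ^ (n - 1) := by
          gcongr
          · exact hq.le
          · omega
      _ = β ^ 2 / (β - 1) := by
          have hqβ : q * q ^ (n - 1) = β := by rw [← pow_succ', Nat.sub_add_cancel hn, hqn]
          rw [hr, ← hqβ]
          ring
  · rw [hrβ]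
    exact bidCost_geomBid_mod_le (by positivity) hβ hqn hr hu (Nat.find_spec (hgrid u))
      fun m' h => not_le.mp (Nat.find_min _ h)

theorem two_mul_rpow_one_add_div (β x : ℝ) (hβ : 0 ≤ β) :
    (2 * β) ^ (1 + x) / ((2 : ℝ) ^ x * (2 * β - 2)) = β ^ (1 + x) / (β - 1) := by
  rw [Real.mul_rpow zero_le_two hβ, Real.rpow_add two_pos, Real.rpow_one,
    show 2 * β - 2 = 2 * (β - 1) by ring, mul_comm ((2 : ℝ) ^ x)]
  field_simp

/-- with `k` advice bits there is an `(r, w)`-competitive online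
bidding strategy, for the claimed value of `r`. -/
theorem bidding_upper_bound_k_bits (w : ℝ) (hw : 4 ≤ w) (k : ℕ) (K r : ℝ)
    (hK : K = 2 ^ k)
    (hr : r = if w ≤ (1 + K) ^ 2 / K
      then (w + Real.sqrt (w ^ 2 - 4 * w)) ^ (1 + 1 / K) /
        ((2 : ℝ) ^ (1 / K) * (w + Real.sqrt (w ^ 2 - 4 * w) - 2))
      else (1 + K) ^ (1 + 1 / K) / K) :
    ∃ (X : Fin (2 ^ k) → ℕ → ℝ) (adv : ℝ → Fin (2 ^ k)),
      (∀ a : Fin (2 ^ k),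
        X a 0 = 1 ∧ StrictMono (X a) ∧ Filter.Tendsto (X a) Filter.atTop Filter.atTop) ∧
      (∀ (a : Fin (2 ^ k)) (u : ℝ), 1 ≤ u → bidCost (X a) u ≤ w * u) ∧
      (∀ u : ℝ, 1 ≤ u → bidCost (X (adv u)) u ≤ r * u) := by
  have hKn : K = ((2 ^ k : ℕ) : ℝ) := by rw [hK]; push_cast; rfl
  have hK1 : 1 ≤ K := hK ▸ one_le_pow₀ one_le_two
  obtain ⟨β, hβ, hβw, hrβ⟩ :
      ∃ β : ℝ, 1 < β ∧ β ^ 2 / (β - 1) ≤ w ∧ r = β ^ (1 + 1 / K) / (β - 1) := by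
    split_ifs at hr with hwK
    · set s := Real.sqrt (w ^ 2 - 4 * w)
      have hs2 : s ^ 2 = w ^ 2 - 4 * w := Real.sq_sqrt (by nlinarith)
      have hβ : 1 < (w + s) / 2 := by linarith [Real.sqrt_nonneg (w ^ 2 - 4 * w)]
      refine ⟨(w + s) / 2, hβ, ?_, ?_⟩
      · rw [div_le_iff₀ (by linarith)]
        linear_combination hs2 / 4
      · rw [hr, ← two_mul_rpow_one_add_div _ _ (by linarith), mul_div_cancel₀ _ two_ne_zero]
    · refine ⟨1 + K, by linarith, ?_, ?_⟩
      · rw [add_sub_cancel_left]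
        exact (not_le.mp hwK).le
      · rw [hr, add_sub_cancel_left]
  obtain ⟨X, adv, hX, hXw, hXr⟩ := exists_competitive_advice_strategies (2 ^ k) (by positivity) hβ
  refine ⟨X, adv, hX, fun a u hu => (hXw a u hu).trans (by gcongr), fun u hu => ?_⟩
  simpa only [hrβ, hKn] using hXr u hu
end

section
/- Fix an integer k ≥ 0 and let K = 2^k. Let X_a : ℕ → ℝ, for a ∈ {0,…,K−1}, be online bidding strategies (each with X_a(0) = 1, strictly increasing, and tending to +∞), each of which is 4-competitive, i.e. cost(X_a, u) ≤ 4u for every u ≥ 1. Let adv : {u : ℝ | u ≥ 1} → {0,…,K−1} be any advice function and let r ≥ 1 be such that cost(X_{adv(u)}, u) ≤ r·u for every u ≥ 1. Then r ≥ 2 + 1/(3·2^k). That is, any bidding strategy with k advice bits that is (r,4)-competitive satisfies r ≥ 2 + 1/(3·2^k). -/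
open Filter Finset Topology

def IsBiddingStrategy (x : ℕ → ℝ) : Prop :=
  x 0 = 1 ∧ StrictMono x ∧ Tendsto x atTop atTop

def IsCompetitive (x : ℕ → ℝ) (r : ℝ) : Prop :=
  ∀ u, 1 ≤ u → bidCost x u ≤ r * u

theorem Finset.exists_le_pow_mul_of_chain {α : Type*} [LinearOrder α] {F : Finset α}
    (hF : F.Nonempty) {f : α → ℝ} {q : ℝ} (hq : 0 ≤ q)
    (h : ∀ t ∈ F, ∀ t' ∈ F, t < t' → f t ≤ q * f t') :
    ∃ t ∈ F, ∃ t' ∈ F, f t ≤ q ^ (#F - 1) * f t' := by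
  classical
  induction F using Finset.induction_on_max with
  | empty => simp at hF
  | insert a s hlt ih =>
    rcases s.eq_empty_or_nonempty with rfl | hs
    · exact ⟨a, mem_insert_self a ∅, a, mem_insert_self a ∅, by simp⟩
    obtain ⟨t, ht, t', ht', hchain⟩ :=
      ih hs fun t ht t' ht' => h t (mem_insert_of_mem ht) t' (mem_insert_of_mem ht')
    refine ⟨t, mem_insert_of_mem ht, a, mem_insert_self a s, ?_⟩
    have hstep := h t' (mem_insert_of_mem ht') a (mem_insert_self a s) (hlt t' ht')
    rw [card_insert_of_notMem fun has => (hlt a has).false, Nat.add_sub_cancel,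
      ← Nat.sub_add_cancel hs.card_pos, pow_succ, mul_assoc]
    exact hchain.trans (mul_le_mul_of_nonneg_left hstep (pow_nonneg hq _))

section bidCost

variable {x : ℕ → ℝ} {u : ℝ}

theorem bidCost_eq_sum_of_le {n : ℕ} (hn : u ≤ x n) (hmin : ∀ m < n, x m < u) :
    bidCost x u = ∑ j ∈ Icc 1 n, x j := by
  have h : ∃ i, u ≤ x i := ⟨n, hn⟩
  rw [bidCost, dif_pos h, (Nat.find_eq_iff h).2 ⟨hn, fun m hm => not_le.2 (hmin m hm)⟩]

theorem exists_bidCost_eq_sum (h : ∃ i, u ≤ x i) :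
    ∃ n, u ≤ x n ∧ bidCost x u = ∑ j ∈ Icc 1 n, x j := by
  classical
  exact ⟨Nat.find h, Nat.find_spec h,
    bidCost_eq_sum_of_le (Nat.find_spec h) fun m hm => not_le.1 (Nat.find_min h hm)⟩

theorem bidCost_eq_sum_of_mem_Ioc (hx : Monotone x) {i : ℕ}
    (hu : u ∈ Set.Ioc (x i) (x (i + 1))) :
    bidCost x u = ∑ j ∈ Icc 1 (i + 1), x j :=
  bidCost_eq_sum_of_le hu.2 fun _ hm => (hx (Nat.lt_succ_iff.1 hm)).trans_lt hu.1

/-- `v` is served by an earlier bid than `w`, so its cost omits the bid `≥ w` serving `w`. -/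
theorem bidCost_add_le_of_lt (hx : ∀ j, 0 ≤ x j) {v w : ℝ} (hv : ∃ i, v ≤ x i)
    (hw : ∃ i, w ≤ x i) (h : bidCost x v < bidCost x w) : bidCost x v + w ≤ bidCost x w := by
  obtain ⟨n, -, hcv⟩ := exists_bidCost_eq_sum hv
  obtain ⟨m, hwm, hcw⟩ := exists_bidCost_eq_sum hw
  have hsub : ∀ {p q : ℕ}, p ≤ q → ∑ j ∈ Icc 1 p, x j ≤ ∑ j ∈ Icc 1 q, x j := fun hpq =>
    sum_le_sum_of_subset_of_nonneg (Icc_subset_Icc_right hpq) fun j _ _ => hx j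
  rw [hcv, hcw] at h ⊢
  obtain ⟨m, rfl⟩ : ∃ m', m = m' + 1 :=
    Nat.exists_eq_add_one.2 (Nat.pos_of_ne_zero fun hm => by
      subst hm; exact h.not_ge (hsub (Nat.zero_le n)))
  have hnm : n ≤ m := Nat.lt_succ_iff.1 (lt_of_not_ge fun hmn => h.not_ge (hsub hmn))
  rw [sum_Icc_succ_top (Nat.le_add_left 1 m)]
  exact add_le_add (hsub hnm) hwm

end bidCost

namespace IsBiddingStrategy

variable {x : ℕ → ℝ}

theorem one_le (hx : IsBiddingStrategy x) (j : ℕ) : 1 ≤ x j :=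
  hx.1 ▸ hx.2.1.monotone (Nat.zero_le j)

theorem exists_le (hx : IsBiddingStrategy x) (u : ℝ) : ∃ i, u ≤ x i :=
  (hx.2.2.eventually_ge_atTop u).exists

theorem sum_Icc_succ_le (hx : IsBiddingStrategy x) {r : ℝ} (hr : IsCompetitive x r) (i : ℕ) :
    ∑ j ∈ Icc 1 (i + 1), x j ≤ r * x i := by
  have hlim : Tendsto (fun u => r * u) (𝓝[>] x i) (𝓝 (r * x i)) :=
    ((continuous_const_mul r).tendsto (x i)).mono_left nhdsWithin_le_nhds
  refine ge_of_tendsto hlim ?_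
  filter_upwards [Ioc_mem_nhdsGT (hx.2.1 (Nat.lt_succ_self i))] with u hu
  rw [← bidCost_eq_sum_of_mem_Ioc hx.2.1.monotone hu]
  exact hr u ((hx.one_le i).trans hu.1.le)

theorem le_pow (hx : IsBiddingStrategy x) {r : ℝ} (hr : IsCompetitive x r) (n : ℕ) :
    x n ≤ r ^ n := by
  induction n with
  | zero => simp [hx.1]
  | succ n ih =>
    have hsum := hx.sum_Icc_succ_le hr n
    rw [sum_Icc_succ_top (Nat.le_add_left 1 n)] at hsum
    have hpos : 0 ≤ ∑ j ∈ Icc 1 n, x j := sum_nonneg fun j _ => zero_le_one.trans (hx.one_le j)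
    have hr0 : 0 ≤ r := by nlinarith [hx.one_le n, hx.one_le (n + 1)]
    calc x (n + 1) ≤ r * x n := by linarith
      _ ≤ r * r ^ n := mul_le_mul_of_nonneg_left ih hr0
      _ = r ^ (n + 1) := (pow_succ' r n).symm

theorem two_mul_le_sum (hx : IsBiddingStrategy x) (h4 : IsCompetitive x 4) (n : ℕ) :
    2 * n * x n ≤ (n + 1) * ∑ j ∈ Icc 1 n, x j := by
  induction n with
  | zero => simp
  | succ n ih =>
    have hsum := hx.sum_Icc_succ_le h4 n
    rw [sum_Icc_succ_top (Nat.le_add_left 1 n)] at hsum ⊢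
    push_cast
    nlinarith [mul_le_mul_of_nonneg_left hsum (Nat.cast_nonneg (α := ℝ) n)]

theorem mul_le_bidCost (hx : IsBiddingStrategy x) (h4 : IsCompetitive x 4) {N : ℕ} {v : ℝ}
    (hv : 4 ^ N ≤ v) :
    2 * N * v ≤ (N + 1) * bidCost x v := by
  obtain ⟨n, hvn, hcost⟩ := exists_bidCost_eq_sum (hx.exists_le v)
  have hNn : N ≤ n := by
    by_contra! hnN
    have : x n < 4 ^ N := (hx.le_pow h4 n).trans_lt (pow_lt_pow_right₀ (by norm_num) hnN)
    linarith
  have hNn' : (N : ℝ) ≤ n := by exact_mod_cast hNn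
  have hv0 : 0 ≤ v := (pow_nonneg (by norm_num) N).trans hv
  have hsum := hx.two_mul_le_sum h4 n
  rw [hcost]
  nlinarith [mul_le_mul_of_nonneg_left hvn (by positivity : (0 : ℝ) ≤ 2 * n),
    mul_le_mul_of_nonneg_left hNn' hv0]

theorem bidCost_le_of_mul_le (hx : IsBiddingStrategy x) (h4 : IsCompetitive x 4) {N : ℕ}
    {r D v w : ℝ} (hv : 0 < v) (hw : 4 ^ N ≤ w) (hvw : D * v ≤ w)
    (hrD : r * (N + 1) < 2 * N * D) (hr : r ≤ 7 / 3)
    (hcv : bidCost x v ≤ r * v) (hcw : bidCost x w ≤ r * w) :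
    bidCost x v ≤ 4 / 7 * bidCost x w := by
  have hlow := hx.mul_le_bidCost h4 hw
  have hlt : bidCost x v < bidCost x w := by
    have : (N + 1) * bidCost x v < (N + 1) * bidCost x w := by
      nlinarith [mul_le_mul_of_nonneg_left hvw (by positivity : (0 : ℝ) ≤ 2 * N)]
    exact lt_of_mul_lt_mul_left this (by positivity)
  have hgap := bidCost_add_le_of_lt (fun j => zero_le_one.trans (hx.one_le j))
    (hx.exists_le v) (hx.exists_le w) hlt
  have hw0 : 0 ≤ w := (pow_pos (by norm_num) N).le.trans hw
  nlinarith [mul_le_mul_of_nonneg_right hr hw0]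

theorem one_le_pow_card_mul_of_served (hx : IsBiddingStrategy x) (h4 : IsCompetitive x 4)
    {N T : ℕ} {r D : ℝ} (hN : 1 ≤ N) (hD : 1 ≤ D) (hrD : r * (N + 1) < 2 * N * D)
    (hr : r ≤ 7 / 3) {F : Finset ℕ} (hF : F.Nonempty) (hFT : ∀ t ∈ F, t < T)
    (hserved : ∀ t ∈ F, bidCost x (4 ^ N * D ^ t) ≤ r * (4 ^ N * D ^ t)) :
    1 ≤ (4 / 7) ^ (#F - 1) * (7 / 3 * D ^ T) := by
  set u : ℕ → ℝ := fun t => 4 ^ N * D ^ t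
  have hV : (0 : ℝ) < 4 ^ N := by positivity
  have hu : ∀ t, 4 ^ N ≤ u t := fun t => le_mul_of_one_le_right hV.le (one_le_pow₀ hD)
  have hlow : ∀ t, 4 ^ N ≤ bidCost x (u t) := fun t => by
    have hN' : (1 : ℝ) ≤ N := by exact_mod_cast hN
    nlinarith [hx.mul_le_bidCost h4 (hu t), hu t]
  obtain ⟨t, ht, t', ht', hchain⟩ := exists_le_pow_mul_of_chain hF
    (by norm_num : (0 : ℝ) ≤ 4 / 7) fun t ht t' ht' htt' =>
      hx.bidCost_le_of_mul_le h4 (hV.trans_le (hu t)) (hu t')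
        (by simpa [u, pow_succ, mul_assoc, mul_comm D] using
          mul_le_mul_of_nonneg_left (pow_le_pow_right₀ hD htt') hV.le)
        hrD hr (hserved t ht) (hserved t' ht')
  have hup : bidCost x (u t') ≤ 4 ^ N * (7 / 3 * D ^ T) :=
    calc bidCost x (u t') ≤ r * u t' := hserved t' ht'
      _ ≤ 7 / 3 * u t' := mul_le_mul_of_nonneg_right hr (hV.le.trans (hu t'))
      _ ≤ 4 ^ N * (7 / 3 * D ^ T) := by
          have := pow_le_pow_right₀ hD (hFT t' ht').le
          simp only [u]; nlinarith
  have hq : (0 : ℝ) ≤ (4 / 7) ^ (#F - 1) := by positivity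
  have := calc 4 ^ N * 1 ≤ bidCost x (u t) := by rw [mul_one]; exact hlow t
    _ ≤ (4 / 7) ^ (#F - 1) * bidCost x (u t') := hchain
    _ ≤ 4 ^ N * ((4 / 7) ^ (#F - 1) * (7 / 3 * D ^ T)) := by
        rw [mul_left_comm]; exact mul_le_mul_of_nonneg_left hup hq
  exact le_of_mul_le_mul_left this hV

end IsBiddingStrategy

theorem two_add_one_div_le_of_advice {ι : Type*} [Fintype ι] (X : ι → ℕ → ℝ)
    (hX : ∀ a, IsBiddingStrategy (X a)) (hcomp : ∀ a, IsCompetitive (X a) 4)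
    (adv : ℝ → ι) {r : ℝ} (hadv : ∀ u, 1 ≤ u → bidCost (X (adv u)) u ≤ r * u) :
    2 + 1 / (3 * Fintype.card ι) ≤ r := by
  classical
  by_contra! hr
  have : Nonempty ι := ⟨adv 1⟩
  set T := 5 * Fintype.card ι
  set D : ℝ := 1 + (T : ℝ)⁻¹
  have hK₀ : 0 < Fintype.card ι := Fintype.card_pos
  have hK : (1 : ℝ) ≤ Fintype.card ι := by exact_mod_cast hK₀
  have hTK : (T : ℝ) = 5 * Fintype.card ι := by simp [T]
  have hD : 1 ≤ D := le_add_of_nonneg_right (by positivity)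
  have hrD : r * ((12 * T : ℕ) + 1) < 2 * (12 * T : ℕ) * D :=
    calc r * ((12 * T : ℕ) + 1) < (2 + 1 / (3 * Fintype.card ι)) * ((12 * T : ℕ) + 1) :=
          mul_lt_mul_of_pos_right hr (by positivity)
      _ ≤ 2 * (12 * T : ℕ) * D := by
          simp only [D]; push_cast; rw [hTK]; field_simp; nlinarith
  have hr73 : r ≤ 7 / 3 := by
    have : 1 / (3 * (Fintype.card ι : ℝ)) ≤ 1 / 3 :=
      one_div_le_one_div_of_le (by norm_num) (by linarith)
    linarith
  obtain ⟨a, -, hcard⟩ := exists_le_card_fiber_of_mul_le_card_of_maps_to (s := range T) (n := 5)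
    (fun t _ => mem_univ (adv (4 ^ (12 * T) * D ^ t))) univ_nonempty (by simp [T, mul_comm])
  set F := {t ∈ range T | adv (4 ^ (12 * T) * D ^ t) = a}
  have key := (hX a).one_le_pow_card_mul_of_served (hcomp a) (by omega) hD hrD hr73
    (F := F) (card_pos.1 (by omega)) (fun t ht => mem_range.1 (mem_filter.1 ht).1) fun t ht =>
      (mem_filter.1 ht).2 ▸ hadv _ (one_le_mul_of_one_le_of_one_le
        (one_le_pow₀ (by norm_num)) (one_le_pow₀ hD))
  have hpow : (4 / 7 : ℝ) ^ (#F - 1) ≤ (4 / 7) ^ 4 :=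
    pow_le_pow_of_le_one (by norm_num) (by norm_num) (by omega)
  have hDT : D ^ T ≤ Real.exp 1 := Real.one_add_inv_pow_le_exp
  have he := Real.exp_one_lt_d9
  nlinarith [mul_le_mul hpow (mul_le_mul_of_nonneg_left hDT (by norm_num : (0 : ℝ) ≤ 7 / 3))
    (by positivity) (by positivity)]

theorem bidding_lower_bound_k_bits_general (k : ℕ) (X : Fin (2 ^ k) → ℕ → ℝ)
    (hX : ∀ a : Fin (2 ^ k),
      X a 0 = 1 ∧ StrictMono (X a) ∧ Filter.Tendsto (X a) Filter.atTop Filter.atTop)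
    (hcomp : ∀ (a : Fin (2 ^ k)) (u : ℝ), 1 ≤ u → bidCost (X a) u ≤ 4 * u)
    (adv : ℝ → Fin (2 ^ k)) (r : ℝ)
    (hadv : ∀ u : ℝ, 1 ≤ u → bidCost (X (adv u)) u ≤ r * u) :
    r ≥ 2 + 1 / (3 * 2 ^ k) := by
  simpa using two_add_one_div_le_of_advice X hX hcomp adv hadv

/-- any bidding strategy with `k` advice bits whose every branch is
`4`-competitive has trusted competitive ratio `r ≥ 2 + 1/(3·2^k)`. -/
theorem bidding_lower_bound_k_bits (k : ℕ) (X : Fin (2 ^ k) → ℕ → ℝ)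
    (hX : ∀ a : Fin (2 ^ k),
      X a 0 = 1 ∧ StrictMono (X a) ∧ Filter.Tendsto (X a) Filter.atTop Filter.atTop)
    (hcomp : ∀ (a : Fin (2 ^ k)) (u : ℝ), 1 ≤ u → bidCost (X a) u ≤ 4 * u)
    (adv : ℝ → Fin (2 ^ k)) (r : ℝ) (hr : 1 ≤ r)
    (hadv : ∀ u : ℝ, 1 ≤ u → bidCost (X (adv u)) u ≤ r * u) :
    r ≥ 2 + 1 / (3 * 2 ^ k) :=
  bidding_lower_bound_k_bits_general k X hX hcomp adv r hadv
end

section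
/- For every integer i ≥ 2, the identity ∑_{k=1}^{i−1} ( ∏_{j=0}^{k−1} (2 + 2/(i−j)) )^{−1} = 1 − 2/(i+1) holds over the reals. -/
/-!
Each factor is `2 + 2/(i-j) = 2 (i+1-j)/(i-j)`, so the product telescopes to `2^k (i+1)/(i+1-k)`
and the sum becomes `(i+1)⁻¹ ∑_{k=1}^{i-1} (i+1-k)/2^k`. The summand `(i+1-k)/2^k` is
`g (k-1) - g k` for `g k = (i-1-k)/2^k`, so that sum telescopes to `g 0 - g (i-1) = i - 1`.
-/

open Finset

lemma sum_Icc_add_one_sub_div_two_pow {K : Type*} [Field K] [NeZero (2 : K)] (x : K) (n : ℕ) :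
    ∑ k ∈ Icc 1 n, (x + 1 - k) / 2 ^ k = x - 1 - (x - 1 - n) / 2 ^ n := by
  induction n with
  | zero => simp
  | succ n ih =>
    rw [sum_Icc_succ_top (by omega), ih]
    push_cast
    field_simp
    ring

lemma prod_range_two_add_two_div (x : ℝ) {k : ℕ} (hk : (k : ℝ) < x + 1) :
    ∏ j ∈ range k, (2 + 2 / (x - j)) = 2 ^ k * (x + 1) / (x + 1 - k) := by
  induction k with
  | zero =>
    have hx : x + 1 ≠ 0 := by push_cast at hk; linarith
    simp [hx]
  | succ k ih =>
    push_cast at hk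
    rw [prod_range_succ, ih (by linarith)]
    have hxk : x - k ≠ 0 := by linarith
    have hxk' : x + 1 - k ≠ 0 := by linarith
    have hxk'' : x + 1 - (k + 1) ≠ 0 := by linarith
    push_cast
    field_simp
    ring

/-- the identity
`∑_{k=1}^{i-1} (∏_{j=0}^{k-1} (2 + 2/(i-j)))⁻¹ = 1 - 2/(i+1)` for every `i ≥ 2`. -/
theorem P_i_identity (i : ℕ) (hi : 2 ≤ i) :
    ∑ k ∈ Finset.Icc 1 (i - 1),
        (∏ j ∈ Finset.range k, (2 + 2 / ((i : ℝ) - (j : ℝ))))⁻¹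
      = 1 - 2 / ((i : ℝ) + 1) := by
  have hcast : ((i - 1 : ℕ) : ℝ) = i - 1 := by push_cast [Nat.cast_sub (by omega : 1 ≤ i)]; ring
  calc ∑ k ∈ Icc 1 (i - 1), (∏ j ∈ range k, (2 + 2 / ((i : ℝ) - (j : ℝ))))⁻¹
      = (∑ k ∈ Icc 1 (i - 1), ((i : ℝ) + 1 - k) / 2 ^ k) / (i + 1) := by
        rw [sum_div]
        refine sum_congr rfl fun k hk ↦ ?_
        have hki : (k : ℝ) ≤ i - 1 := hcast ▸ Nat.cast_le.mpr (mem_Icc.mp hk).2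
        rw [prod_range_two_add_two_div _ (by linarith), inv_div, div_div, mul_comm]
    _ = (i - 1) / (i + 1) := by rw [sum_Icc_add_one_sub_div_two_pow, hcast]; ring
    _ = 1 - 2 / ((i : ℝ) + 1) := by field_simp; ring
end

section
/- Fix a real β ∈ [0,1] and define the weight of a real x > 0 by: weight(x) = 1 if x > 1/2; weight(x) = 1/2 if 1/3 < x ≤ 1/2; and weight(x) = ((6−6β)/(4−3β))·x if x ≤ 1/3. Then for every finite list x₁,…,x_n of reals with 0 < x_i ≤ 1 for each i and ∑_{i=1}^{n} x_i ≤ 1, the total weight satisfies ∑_{i=1}^{n} weight(x_i) ≤ (14−11β)/(8−6β). -/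
/-!
With `D = 8 - 6β`, every item satisfies `D · weight x ≤ (12 - 12β) x + bonus x`, where the bonus is
`2` for a large item, `β` for a small one and `0` for a tiny one (with equality at the lower end of
each size class). Over a bin the linear part sums to at most `12 - 12β`. The numbers `L`, `S` of
large and small items satisfy `3L + 2S < 6 · (total size) ≤ 6`, so `L ≤ 1`, `S ≤ 2 - 2L`, and the
bonus `2L + βS` is at most `2 + β`.
-/

namespace BinPacking

noncomputable def largeCount (l : List ℝ) : ℕ := l.countP fun x => 1 / 2 < x

noncomputable def smallCount (l : List ℝ) : ℕ := l.countP fun x => 1 / 3 < x ∧ x ≤ 1 / 2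

theorem largeCount_cons (x : ℝ) (l : List ℝ) :
    largeCount (x :: l) = largeCount l + if 1 / 2 < x then 1 else 0 := by
  simp [largeCount, List.countP_cons]

theorem smallCount_cons (x : ℝ) (l : List ℝ) :
    smallCount (x :: l) = smallCount l + if 1 / 3 < x ∧ x ≤ 1 / 2 then 1 else 0 := by
  simp [smallCount, List.countP_cons]

theorem three_mul_largeCount_add_two_mul_smallCount_lt {l : List ℝ} (hl : l ≠ [])
    (hpos : ∀ x ∈ l, 0 < x) :
    (3 * largeCount l + 2 * smallCount l : ℝ) < 6 * l.sum := by
  induction l with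
  | nil => exact absurd rfl hl
  | cons x l ih =>
    have hx : 0 < x := hpos x List.mem_cons_self
    have hitem : ((3 * if 1 / 2 < x then 1 else 0) + 2 * if 1 / 3 < x ∧ x ≤ 1 / 2 then 1 else 0 : ℝ)
        < 6 * x := by
      split_ifs <;> linarith
    have htail : (3 * largeCount l + 2 * smallCount l : ℝ) ≤ 6 * l.sum := by
      rcases eq_or_ne l [] with rfl | hne
      · simp [largeCount, smallCount]
      · exact (ih hne fun y hy => hpos y (List.mem_cons_of_mem x hy)).le
    rw [largeCount_cons, smallCount_cons, List.sum_cons]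
    push_cast
    linarith

theorem three_mul_largeCount_add_two_mul_smallCount_le_five {l : List ℝ}
    (hpos : ∀ x ∈ l, 0 < x) (hsum : l.sum ≤ 1) :
    3 * largeCount l + 2 * smallCount l ≤ 5 := by
  rcases eq_or_ne l [] with rfl | hne
  · simp [largeCount, smallCount]
  · have h := three_mul_largeCount_add_two_mul_smallCount_lt hne hpos
    have h6 : (3 * largeCount l + 2 * smallCount l : ℝ) < 6 := h.trans_le (by linarith)
    have h6' : 3 * largeCount l + 2 * smallCount l < 6 := by exact_mod_cast h6
    omega

theorem two_mul_add_mul_le_of_three_mul_add_two_mul_le_five {β : ℝ} (hβ0 : 0 ≤ β) (hβ1 : β ≤ 1)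
    {L S : ℕ} (h : 3 * L + 2 * S ≤ 5) :
    2 * (L : ℝ) + β * S ≤ 2 + β := by
  have hL : L ≤ 1 := by omega
  interval_cases L
  · have hS : (S : ℝ) ≤ 2 := by exact_mod_cast (by omega : S ≤ 2)
    push_cast
    linarith [mul_le_mul_of_nonneg_left hS hβ0]
  · have hS : (S : ℝ) ≤ 1 := by exact_mod_cast (by omega : S ≤ 1)
    push_cast
    linarith [mul_le_mul_of_nonneg_left hS hβ0]

theorem mul_weight_le {β : ℝ} (hβ1 : β ≤ 1) {weight : ℝ → ℝ}
    (hw_large : ∀ x : ℝ, 1 / 2 < x → weight x = 1)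
    (hw_small : ∀ x : ℝ, 1 / 3 < x → x ≤ 1 / 2 → weight x = 1 / 2)
    (hw_tiny : ∀ x : ℝ, x ≤ 1 / 3 → weight x = (6 - 6 * β) / (4 - 3 * β) * x) (x : ℝ) :
    (8 - 6 * β) * weight x ≤ (12 - 12 * β) * x
      + ((2 * if 1 / 2 < x then 1 else 0) + β * if 1 / 3 < x ∧ x ≤ 1 / 2 then 1 else 0) := by
  by_cases hlarge : 1 / 2 < x
  · have hsmall : ¬(1 / 3 < x ∧ x ≤ 1 / 2) := fun h => by linarith [h.2]
    rw [hw_large x hlarge, if_pos hlarge, if_neg hsmall]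
    nlinarith
  by_cases hsmall : 1 / 3 < x
  · rw [hw_small x hsmall (not_lt.1 hlarge), if_neg hlarge, if_pos ⟨hsmall, not_lt.1 hlarge⟩]
    nlinarith
  · have hrate : (8 - 6 * β) * ((6 - 6 * β) / (4 - 3 * β)) = 12 - 12 * β := by
      rw [mul_div_assoc', div_eq_iff (by linarith : (0 : ℝ) < 4 - 3 * β).ne']
      ring
    rw [hw_tiny x (not_lt.1 hsmall), if_neg hlarge, if_neg fun h => hsmall h.1, ← mul_assoc, hrate]
    simp

theorem mul_sum_map_weight_le {β : ℝ} (hβ1 : β ≤ 1) {weight : ℝ → ℝ}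
    (hw_large : ∀ x : ℝ, 1 / 2 < x → weight x = 1)
    (hw_small : ∀ x : ℝ, 1 / 3 < x → x ≤ 1 / 2 → weight x = 1 / 2)
    (hw_tiny : ∀ x : ℝ, x ≤ 1 / 3 → weight x = (6 - 6 * β) / (4 - 3 * β) * x) (l : List ℝ) :
    (8 - 6 * β) * (l.map weight).sum
      ≤ (12 - 12 * β) * l.sum + (2 * largeCount l + β * smallCount l) := by
  induction l with
  | nil => simp [largeCount, smallCount]
  | cons x l ih =>
    have hx := mul_weight_le hβ1 hw_large hw_small hw_tiny x
    rw [List.map_cons, List.sum_cons, List.sum_cons, largeCount_cons, smallCount_cons, mul_add,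
      mul_add]
    push_cast
    linarith

end BinPacking

open BinPacking in
/-- the total weight of any bin (a collection of items of positive
size at most 1, of total size at most 1) is at most `(14 - 11β)/(8 - 6β)`. -/
theorem bin_packing_weight_bound (β : ℝ) (hβ0 : 0 ≤ β) (hβ1 : β ≤ 1)
    (weight : ℝ → ℝ)
    (hw_large : ∀ x : ℝ, 1 / 2 < x → weight x = 1)
    (hw_small : ∀ x : ℝ, 1 / 3 < x → x ≤ 1 / 2 → weight x = 1 / 2)
    (hw_tiny : ∀ x : ℝ, x ≤ 1 / 3 → weight x = (6 - 6 * β) / (4 - 3 * β) * x) :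
    ∀ l : List ℝ, (∀ x ∈ l, 0 < x ∧ x ≤ 1) → l.sum ≤ 1 →
      (l.map weight).sum ≤ (14 - 11 * β) / (8 - 6 * β) := by
  intro l hl hsum
  have hpos : ∀ x ∈ l, 0 < x := fun x hx => (hl x hx).1
  have hweight := mul_sum_map_weight_le hβ1 hw_large hw_small hw_tiny l
  have hlinear : (12 - 12 * β) * l.sum ≤ 12 - 12 * β :=
    mul_le_of_le_one_right (by linarith) hsum
  have hbonus := two_mul_add_mul_le_of_three_mul_add_two_mul_le_five hβ0 hβ1
    (three_mul_largeCount_add_two_mul_smallCount_le_five hpos hsum)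
  rw [le_div_iff₀ (by linarith), mul_comm]
  linarith
end
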